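/- arXiv:1402.5113 — 12 statements merged into one kernel-verified Lean document; each statement's English description precedes it below -/
import Mathlib

section
/- If G is a graph on n vertices with chromatic number at least n - c, where n > 2c, then G contains a clique of size at least n - 2c. -/
/-- If `G` is a graph on `n` vertices with chromatic number at least `n - c`,
where `n > 2c` and `c` is a positive integer, then `G` contains a clique
of size at least `n - 2c`. -/
theorem stmt_0 (V : Type*) [Fintype V] (G : SimpleGraph V) (n c : ℕ)
    (hn : n = Fintype.card V) (hc : 0 < c) (hnc : 2 * c < n)
    (hchi : ((n - c : ℕ) : ℕ∞) ≤ G.chromaticNumber) :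
    ∃ t : Finset V, G.IsClique (t : Set V) ∧ n - 2 * c ≤ t.card := by
  classical
  set m : ℕ := G.chromaticNumber.toNat with hm
  have hfin : G.chromaticNumber ≤ (Fintype.card V : ℕ∞) :=
    SimpleGraph.chromaticNumber_le_iff_colorable.2 G.colorable_of_fintype
  have hne : G.chromaticNumber ≠ ⊤ := by
    intro h; rw [h] at hfin; exact (ENat.coe_lt_top _).not_ge hfin
  have hmeq : G.chromaticNumber = (m : ℕ∞) := (ENat.coe_toNat hne).symm
  have hmlb : n - c ≤ m := by
    rw [hmeq] at hchi; exact_mod_cast hchi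
  obtain ⟨C⟩ : G.Colorable m := by
    rw [hm]; exact G.colorable_chromaticNumber_of_fintype
  -- singleton-class vertices
  set t : Finset V := Finset.univ.filter (fun v => ∀ w, C w = C v → w = v) with ht
  refine ⟨t, ?_, ?_⟩
  · -- clique
    intro u hu v hv huv
    by_contra hadj
    simp only [ht, Finset.coe_filter, Set.mem_setOf_eq, Finset.mem_univ, true_and] at hu hv
    have hCuv : C v ≠ C u := fun h => huv (hu v h).symm
    have hm0 : 0 < m := by omega
    -- build a coloring avoiding color `C u`
    have hD : G.Colorable (m - 1) := by
      have key : ∀ {w w' : V}, G.Adj w w' →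
          (if h : C w = C u then C v else C w) ≠ (if h : C w' = C u then C v else C w') := by
        intro w w' hww
        by_cases h1 : C w = C u <;> by_cases h2 : C w' = C u <;> simp [h1, h2]
        · exact absurd (by rw [hu w h1, hu w' h2] : w = w') hww.ne
        · intro h; exact hadj (by rwa [hu w h1, hv w' h.symm] at hww)
        · intro h; exact hadj (by rw [hv w h, hu w' h2] at hww; exact hww.symm)
        · exact C.valid hww
      have D : G.Coloring {x : Fin m // x ≠ C u} :=
        SimpleGraph.Coloring.mk
          (fun w => if h : C w = C u then ⟨C v, hCuv⟩ else ⟨C w, h⟩)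
          (by
            intro w w' hww h
            apply key hww
            have := congrArg Subtype.val h
            by_cases h1 : C w = C u <;> by_cases h2 : C w' = C u <;>
              simp [h1, h2] at this ⊢ <;> exact this)
      have := D.colorable
      rwa [Fintype.card_subtype_compl, Fintype.card_fin, Fintype.card_subtype_eq] at this
    have : G.chromaticNumber ≤ ((m - 1 : ℕ) : ℕ∞) :=
      SimpleGraph.chromaticNumber_le_iff_colorable.2 hD
    rw [hmeq, Nat.cast_le] at this
    omega
  · -- cardinality
    set img : Finset (Fin m) := Finset.univ.image C with himg
    set u : ℕ := img.card with hu
    -- chromatic number is at most the number of used colors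
    have humb : m ≤ u := by
      have D : G.Coloring {x : Fin m // x ∈ img} :=
        SimpleGraph.Coloring.mk
          (fun w => ⟨C w, Finset.mem_image_of_mem C (Finset.mem_univ w)⟩)
          (fun h hv => C.valid h (congrArg Subtype.val hv))
      have := D.colorable
      rw [Fintype.card_coe] at this
      have h2 : G.chromaticNumber ≤ (u : ℕ∞) :=
        SimpleGraph.chromaticNumber_le_iff_colorable.2 this
      rw [hmeq, Nat.cast_le] at h2
      exact h2
    set S : Finset (Fin m) :=
      img.filter (fun a => (Finset.univ.filter (fun w => C w = a)).card = 1) with hS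
    -- every color in S comes from a vertex in t
    have hsub : S ⊆ t.image C := by
      intro a ha
      simp only [hS, Finset.mem_filter] at ha
      obtain ⟨v, hv⟩ := Finset.card_eq_one.1 ha.2
      have hvC : C v = a := by
        have : v ∈ Finset.univ.filter (fun w => C w = a) := by rw [hv]; exact Finset.mem_singleton_self v
        simpa using this
      have hvt : v ∈ t := by
        simp only [ht, Finset.mem_filter, Finset.mem_univ, true_and]
        intro w hw
        have : w ∈ Finset.univ.filter (fun z => C z = a) := by simp [hw, hvC]
        rw [hv] at this; simpa using this
      exact Finset.mem_image.2 ⟨v, hvt, hvC⟩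
    have hScard : S.card ≤ t.card :=
      le_trans (Finset.card_le_card hsub) (Finset.card_image_le)
    -- counting: n ≥ 2u - S.card
    have hcount : 2 * u ≤ n + S.card := by
      have hsum : n = ∑ a ∈ img, (Finset.univ.filter (fun w => C w = a)).card := by
        rw [hn, ← Finset.card_univ]
        exact Finset.card_eq_sum_card_image C Finset.univ
      have hlb : ∀ a ∈ img, (if a ∈ S then 1 else 2) ≤ (Finset.univ.filter (fun w => C w = a)).card := by
        intro a ha
        have hpos : 0 < (Finset.univ.filter (fun w => C w = a)).card := by
          rw [Finset.card_pos]
          obtain ⟨w, _, hw⟩ := Finset.mem_image.1 ha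
          exact ⟨w, by simp [hw]⟩
        by_cases haS : a ∈ S
        · simpa [haS] using hpos
        · have : (Finset.univ.filter (fun w => C w = a)).card ≠ 1 := by
            intro h; exact haS (Finset.mem_filter.2 ⟨ha, h⟩)
          simp only [haS, if_false]
          omega
      have h1 : ∑ a ∈ img, (if a ∈ S then 1 else 2) ≤ n := by
        rw [hsum]; exact Finset.sum_le_sum hlb
      have h2 : ∑ a ∈ img, (if a ∈ S then 1 else 2) = S.card + 2 * (u - S.card) := by
        rw [← Finset.sum_filter_add_sum_filter_not img (fun a => a ∈ S)]
        have hf1 : img.filter (fun a => a ∈ S) = S :=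
          Finset.filter_mem_eq_inter.trans (Finset.inter_eq_right.2 (Finset.filter_subset _ _))
        have hf2 : (img.filter (fun a => ¬ a ∈ S)).card = u - S.card := by
          have := Finset.card_filter_add_card_filter_not (s := img) (p := fun a => a ∈ S)
          rw [hf1] at this
          omega
        rw [Finset.sum_congr hf1 (fun a ha => if_pos ha),
            Finset.sum_congr rfl (fun a ha => if_neg (Finset.mem_filter.1 ha).2),
            Finset.sum_const, Finset.sum_const, hf2]
        ring
      omega
    omega
end

section
/- The dimension of the standard example S_d equals d, for every d ≥ 2. -/
/-- `x` and `y` are incomparable elements of a poset. -/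
def Incomp {α : Type*} [PartialOrder α] (x y : α) : Prop := ¬ x ≤ y ∧ ¬ y ≤ x

/-- `r` is a linear extension of the partial order on `α`. -/
def IsLinearExtension {α : Type*} [PartialOrder α] (r : α → α → Prop) : Prop :=
  IsLinearOrder α r ∧ ∀ x y : α, x ≤ y → r x y

/-- `α` admits a realizer consisting of `d` linear extensions. -/
def RealizerOfSize (α : Type*) [PartialOrder α] (d : ℕ) : Prop :=
  ∃ L : Fin d → (α → α → Prop), (∀ i, IsLinearExtension (L i)) ∧
    ∀ x y : α, x ≤ y ↔ ∀ i, L i x y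

/-- The Dushnik–Miller dimension: the least positive integer `d`
for which the order is the intersection of `d` linear extensions. -/
noncomputable def dimP (α : Type*) [PartialOrder α] : ℕ :=
  sInf {d | 0 < d ∧ RealizerOfSize α d}

/-- The ground set of the standard example `S d`: `inl i` is the minimal element `aᵢ`,
`inr j` is the maximal element `bⱼ`. -/
def StdEx (d : ℕ) := Fin d ⊕ Fin d

/-- The order of the standard example: `aᵢ < bⱼ` iff `i ≠ j`. -/
instance (d : ℕ) : PartialOrder (StdEx d) where
  le x y := x = y ∨ ∃ i j : Fin d, x = Sum.inl i ∧ y = Sum.inr j ∧ i ≠ j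
  le_refl x := Or.inl rfl
  le_trans a b c hab hbc := by
    rcases hab with rfl | ⟨i, j, rfl, rfl, hij⟩
    · exact hbc
    · rcases hbc with rfl | ⟨i', j', h1, h2, h3⟩
      · exact Or.inr ⟨i, j, rfl, rfl, hij⟩
      · simp at h1
  le_antisymm a b hab hba := by
    rcases hab with rfl | ⟨i, j, rfl, rfl, hij⟩
    · rfl
    · rcases hba with h | ⟨i', j', h1, h2, h3⟩
      · simp at h
      · simp at h1

section Aux

variable {d : ℕ}

lemma isLinearOrder_of_rank {α : Type*} (f : α → ℕ) (hf : Function.Injective f) :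
    IsLinearOrder α (fun x y => f x ≤ f y) where
  refl _ := le_refl _
  trans _ _ _ := le_trans
  antisymm _ _ h1 h2 := hf (le_antisymm h1 h2)
  total _ _ := le_total _ _

/-- rank function for the `i`-th linear extension of the standard example -/
def rk (d : ℕ) (i : Fin d) : Fin d ⊕ Fin d → ℕ
  | Sum.inl j => if j = i then d + 1 else j.val
  | Sum.inr j => if j = i then d else d + 2 + j.val

lemma rk_inj (i : Fin d) : Function.Injective (rk d i) := by
  rintro (x | x) (y | y) h <;>
    have hx := x.isLt <;> have hy := y.isLt <;>
    by_cases hxi : x = i <;> by_cases hyi : y = i <;>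
    simp [rk, hxi, hyi] at h ⊢ <;>
  first
    | exact hxi.trans hyi.symm
    | exact Fin.ext (by omega)
    | exact absurd h (by omega)
    | omega

lemma rk_ext (i : Fin d) {a b : Fin d} (hab : a ≠ b) :
    rk d i (Sum.inl a) ≤ rk d i (Sum.inr b) := by
  have ha := a.isLt
  by_cases hai : a = i <;> by_cases hbi : b = i <;>
    simp [rk, hai, hbi] <;>
  first
    | exact absurd (hai.trans hbi.symm) hab
    | omega

lemma realizer_d (hd : 2 ≤ d) : RealizerOfSize (StdEx d) d := by
  refine ⟨fun i x y => rk d i x ≤ rk d i y,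
    fun i => ⟨isLinearOrder_of_rank (rk d i) (rk_inj i), ?_⟩, ?_⟩
  · rintro x y (rfl | ⟨a, b, rfl, rfl, hab⟩)
    · exact le_refl _
    · exact rk_ext i hab
  · intro x y
    constructor
    · rintro (rfl | ⟨a, b, rfl, rfl, hab⟩) i
      · exact le_refl _
      · exact rk_ext i hab
    · rintro h
      rcases x with x | x <;> rcases y with y | y
      · -- inl, inl : take i = x
        have hx := h x
        have hy := y.isLt
        by_cases hxy : y = x
        · exact Or.inl (congrArg Sum.inl hxy.symm)
        · exfalso
          simp [rk, hxy] at hx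
          omega
      · -- inl, inr
        by_cases hxy : x = y
        · exfalso
          subst hxy
          have hx := h x
          simp [rk] at hx
        · exact Or.inr ⟨x, y, rfl, rfl, hxy⟩
      · -- inr, inl : contradiction, pick i ≠ y
        exfalso
        haveI : Nontrivial (Fin d) := Fin.nontrivial_iff_two_le.mpr hd
        obtain ⟨i, hi⟩ := exists_ne y
        have hx := h i
        have hy := y.isLt
        have hyi : ¬ (y = i) := fun hh => hi hh.symm
        by_cases hxi : x = i <;> simp [rk, hxi, hyi] at hx <;> omega
      · -- inr, inr : take i = y
        have hx := h y
        by_cases hxy : x = y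
        · exact Or.inl (congrArg Sum.inr hxy)
        · exfalso
          simp [rk, hxy] at hx
          omega

lemma lower_bound (k : ℕ) (hk : RealizerOfSize (StdEx d) k) : d ≤ k := by
  obtain ⟨L, hlin, hint⟩ := hk
  have hpair : ∀ i : Fin d, ∃ t : Fin k, L t (Sum.inr i) (Sum.inl i) := by
    intro i
    have h2 : ¬ ∀ t, L t (Sum.inl i) (Sum.inr i) := by
      intro hh
      rcases (hint (Sum.inl i) (Sum.inr i)).mpr hh with hle | ⟨a, b, ha, hb, hab⟩
      · exact absurd hle (by simp)
      · cases Sum.inl.inj ha; cases Sum.inr.inj hb; exact hab rfl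
    push_neg at h2
    obtain ⟨t, ht⟩ := h2
    haveI := (hlin t).1
    exact ⟨t, (total_of (L t) _ _).resolve_left ht⟩
  choose g hg using hpair
  have hginj : Function.Injective g := by
    intro i j hij
    by_contra hne
    haveI := (hlin (g j)).1
    have h1 : L (g j) (Sum.inl i) (Sum.inr j) :=
      (hlin (g j)).2 _ _ (Or.inr ⟨i, j, rfl, rfl, hne⟩)
    have h2 : L (g j) (Sum.inl j) (Sum.inr i) :=
      (hlin (g j)).2 _ _ (Or.inr ⟨j, i, rfl, rfl, fun h => hne h.symm⟩)
    have h3 := hg i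
    rw [hij] at h3
    have h4 := hg j
    have hbij : L (g j) (Sum.inr i) (Sum.inr j) := trans_of (L (g j)) h3 h1
    have hbji : L (g j) (Sum.inr j) (Sum.inr i) := trans_of (L (g j)) h4 h2
    have : (Sum.inr i : StdEx d) = Sum.inr j := antisymm_of (L (g j)) hbij hbji
    exact hne (Sum.inr.inj this)
  calc d = Fintype.card (Fin d) := (Fintype.card_fin d).symm
    _ ≤ Fintype.card (Fin k) := Fintype.card_le_of_injective g hginj
    _ = k := Fintype.card_fin k

end Aux

/-- The dimension of the standard example `S d` equals `d`, for every `d ≥ 2`. -/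
theorem stmt_1 (d : ℕ) (hd : 2 ≤ d) : dimP (StdEx d) = d := by
  have hdpos : 0 < d := by omega
  apply le_antisymm
  · exact Nat.sInf_le ⟨hdpos, realizer_d hd⟩
  · exact le_csInf ⟨d, hdpos, realizer_d hd⟩ fun k hk => lower_bound k hk.2
end

section
/- For any finite poset P with at least 2 elements and any x ∈ P, dim(P) ≤ 1 + dim(P − {x}). -/
/-! Let `L₀, …, Lₜ` be a realizer of `P − x`. For `i ≥ 1`, insert `x` into `Lᵢ` just above
every element that `Lᵢ` places below some `c < x`; this is a linear extension of `P` restricting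
to `Lᵢ`. From `L₀` build two linear extensions instead of one: move everything not above `x`
below `x`, resp. only what is below `x`, keeping the `L₀` order inside each block. The first puts
every element incomparable to `x` below `x`, the second above it, and a pair reversed by `L₀`
stays reversed in one of them unless `a < x < b`, which forces `a ≤ b`. These `t + 2` orders
realize `P`. If `P − x` has no finite realizer then neither has `P`, and `dimP P` is the junk
value `0`. -/

section KeyLex

variable {α β : Type*} [LinearOrder β] {r : α → α → Prop} {f : α → β} {a b : α}

def keyLex (f : α → β) (r : α → α → Prop) : α → α → Prop :=
  Function.onFun (Prod.Lex (· < ·) r) fun a => (f a, a)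

theorem keyLex_iff : keyLex f r a b ↔ f a < f b ∨ f a = f b ∧ r a b :=
  Prod.lex_def

instance isLinearOrder_keyLex [IsLinearOrder α r] : IsLinearOrder α (keyLex f r) :=
  have : IsLinearOrder (β × α) (Prod.Lex (· < ·) r) := { }
  have hinj : Function.Injective fun a => (f a, a) := fun _ _ h => congrArg Prod.snd h
  hinj.isLinearOrder_onFun _

theorem lt_of_keyLex_of_rel_swap [Std.Antisymm r] (h : keyLex f r a b) (hba : r b a)
    (hne : a ≠ b) : f a < f b :=
  keyLex_iff.1 h |>.resolve_right fun ⟨_, hab⟩ => hne (antisymm hab hba)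

end KeyLex

section InsertCut

variable {α : Type*} {x a b : α} {ℓ : ({x}ᶜ : Set α) → ({x}ᶜ : Set α) → Prop} {T : Set α}

open Classical in
/-- `ℓ` extended to `α` with `x` as the least element. -/
def extendBot (x : α) (ℓ : ({x}ᶜ : Set α) → ({x}ᶜ : Set α) → Prop) : α → α → Prop :=
  Function.onFun (Sum.Lex (· ≤ ·) ℓ) fun a => if h : a = x then Sum.inl () else Sum.inr ⟨a, h⟩

instance isLinearOrder_extendBot [IsLinearOrder _ ℓ] : IsLinearOrder α (extendBot x ℓ) := by
  have : IsLinearOrder (Unit ⊕ ({x}ᶜ : Set α)) (Sum.Lex (· ≤ ·) ℓ) := { }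
  unfold extendBot
  apply Function.Injective.isLinearOrder_onFun
  intro a b hab
  by_cases ha : a = x <;> by_cases hb : b = x <;> simp_all [Subtype.ext_iff]

theorem extendBot_self_left : extendBot x ℓ x b := by
  by_cases hb : b = x <;> simp [extendBot, Function.onFun, hb]

theorem extendBot_of_ne (ha : a ≠ x) (hb : b ≠ x) : extendBot x ℓ a b ↔ ℓ ⟨a, ha⟩ ⟨b, hb⟩ := by
  simp [extendBot, Function.onFun, ha, hb]

theorem extendBot_of_le [LE α] (hℓ : ∀ A B, A ≤ B → ℓ A B) (hab : a ≤ b) (hb : b ≠ x) :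
    extendBot x ℓ a b := by
  by_cases ha : a = x
  · rw [ha]
    exact extendBot_self_left
  · exact (extendBot_of_ne ha hb).2 (hℓ _ _ hab)

open Classical in
noncomputable def cutKey (x : α) (T : Set α) (a : α) : ℕ :=
  if a = x then 1 else if a ∈ T then 0 else 2

/-- The elements of `T` (other than `x`), then `x`, then the rest, each block ordered by `ℓ`. -/
def insertCut (x : α) (ℓ : ({x}ᶜ : Set α) → ({x}ᶜ : Set α) → Prop) (T : Set α) : α → α → Prop :=
  keyLex (cutKey x T) (extendBot x ℓ)

theorem cutKey_eq_cutKey_self : cutKey x T a = cutKey x T x ↔ a = x := by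
  unfold cutKey
  split_ifs <;> simp_all

theorem not_mem_of_insertCut_self_left (h : insertCut x ℓ T x b) (hb : b ≠ x) : b ∉ T := by
  intro hbT
  rcases keyLex_iff.1 h with hlt | ⟨heq, -⟩
  · simp [cutKey, hb, hbT] at hlt
  · exact hb (cutKey_eq_cutKey_self.1 heq.symm)

theorem mem_of_insertCut_self_right (h : insertCut x ℓ T a x) (ha : a ≠ x) : a ∈ T := by
  by_contra haT
  rcases keyLex_iff.1 h with hlt | ⟨heq, -⟩
  · simp [cutKey, ha, haT] at hlt
  · exact ha (cutKey_eq_cutKey_self.1 heq)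

theorem mem_not_mem_of_insertCut [IsLinearOrder _ ℓ] (h : insertCut x ℓ T a b)
    (hba : extendBot x ℓ b a) (hne : a ≠ b) (ha : a ≠ x) (hb : b ≠ x) : a ∈ T ∧ b ∉ T := by
  have hlt := lt_of_keyLex_of_rel_swap h hba hne
  simp only [cutKey, ha, hb, if_false] at hlt
  split_ifs at hlt <;> simp_all

variable [PartialOrder α]

theorem cutKey_monotone (hT : IsLowerSet T) (hD : ∀ a, a < x → a ∈ T)
    (hU : ∀ a, x < a → a ∉ T) : Monotone (cutKey x T) := by
  intro a b hab
  by_cases ha : a = x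
  · subst ha
    rcases hab.eq_or_lt with rfl | hlt
    · rfl
    · simp [cutKey, hlt.ne', hU b hlt]
  by_cases hb : b = x
  · subst hb
    simp [cutKey, ha, hD a (lt_of_le_of_ne hab ha)]
  by_cases hbT : b ∈ T
  · simp [cutKey, ha, hb, hbT, hT hab hbT]
  · simp only [cutKey, ha, hb, hbT, if_false]
    split_ifs <;> omega

theorem isLinearExtension_insertCut (hℓ : IsLinearExtension ℓ) (hT : IsLowerSet T)
    (hD : ∀ a, a < x → a ∈ T) (hU : ∀ a, x < a → a ∉ T) :
    IsLinearExtension (insertCut x ℓ T) := by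
  have := hℓ.1
  refine ⟨isLinearOrder_keyLex, fun a b hab => keyLex_iff.2 ?_⟩
  refine (cutKey_monotone hT hD hU hab).lt_or_eq.imp_right fun hkey => ⟨hkey, ?_⟩
  by_cases hb : b = x
  · subst hb
    rw [cutKey_eq_cutKey_self.1 hkey]
    exact extendBot_self_left
  · exact extendBot_of_le hℓ.2 hab hb

theorem isLinearExtension_insertCut_not_gt (hℓ : IsLinearExtension ℓ) :
    IsLinearExtension (insertCut x ℓ {a | ¬ x < a}) :=
  isLinearExtension_insertCut hℓ (fun _ _ hab hb hxa => hb (hxa.trans_le hab))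
    (fun _ hax hxa => lt_asymm hax hxa) fun _ hxa ha => ha hxa

theorem isLinearExtension_insertCut_lt (hℓ : IsLinearExtension ℓ) :
    IsLinearExtension (insertCut x ℓ {a | a < x}) :=
  isLinearExtension_insertCut hℓ (fun _ _ hab hb => hab.trans_lt hb) (fun _ => id)
    fun _ hxa hax => lt_asymm hax hxa

end InsertCut

section LowerCut

variable {α : Type*} [PartialOrder α] {x a b : α} {ℓ : ({x}ᶜ : Set α) → ({x}ᶜ : Set α) → Prop}

def lowerCut (x : α) (ℓ : ({x}ᶜ : Set α) → ({x}ᶜ : Set α) → Prop) : Set α :=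
  {a | ∃ c ≤ x, extendBot x ℓ a c}

theorem mem_lowerCut_of_extendBot [IsTrans α (extendBot x ℓ)] (hab : extendBot x ℓ a b)
    (hb : b ∈ lowerCut x ℓ) : a ∈ lowerCut x ℓ :=
  let ⟨c, hcx, hbc⟩ := hb
  ⟨c, hcx, _root_.trans hab hbc⟩

theorem isLowerSet_lowerCut (hℓ : IsLinearExtension ℓ) : IsLowerSet (lowerCut x ℓ) := by
  have := hℓ.1
  intro b a hab hb
  by_cases hbx : b = x
  · exact ⟨a, hbx ▸ hab, refl _⟩
  · exact mem_lowerCut_of_extendBot (extendBot_of_le hℓ.2 hab hbx) hb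

theorem not_mem_lowerCut_of_lt (hℓ : IsLinearExtension ℓ) (ha : x < a) : a ∉ lowerCut x ℓ := by
  have := hℓ.1
  rintro ⟨c, hcx, hac⟩
  have hca : c < a := hcx.trans_lt ha
  exact hca.ne (antisymm (extendBot_of_le hℓ.2 hca.le ha.ne') hac)

theorem isLinearExtension_insertCut_lowerCut (hℓ : IsLinearExtension ℓ) :
    IsLinearExtension (insertCut x ℓ (lowerCut x ℓ)) :=
  have := hℓ.1
  isLinearExtension_insertCut hℓ (isLowerSet_lowerCut hℓ) (fun a hax => ⟨a, hax.le, refl _⟩)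
    fun _ => not_mem_lowerCut_of_lt hℓ

end LowerCut

section Realizer

variable {α : Type*} [PartialOrder α]

theorem realizerOfSize_of_forall_imp_le {d : ℕ} {L : Fin d → α → α → Prop}
    (hL : ∀ i, IsLinearExtension (L i)) (h : ∀ a b, (∀ i, L i a b) → a ≤ b) :
    RealizerOfSize α d :=
  ⟨L, hL, fun a b => ⟨fun hab i => (hL i).2 a b hab, h a b⟩⟩

theorem RealizerOfSize.subtype {d : ℕ} (s : Set α) (h : RealizerOfSize α d) :
    RealizerOfSize s d := by
  obtain ⟨L, hL, hiff⟩ := h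
  refine ⟨fun i => Function.onFun (L i) Subtype.val, fun i => ⟨?_, fun a b => (hL i).2 a b⟩,
    fun a b => hiff a b⟩
  have := (hL i).1
  exact Subtype.val_injective.isLinearOrder_onFun _

theorem RealizerOfSize.of_compl_singleton {t : ℕ} (x : α)
    (h : RealizerOfSize ({x}ᶜ : Set α) (t + 1)) : RealizerOfSize α (t + 2) := by
  obtain ⟨L, hL, hiff⟩ := h
  have := fun i => (hL i).1
  refine realizerOfSize_of_forall_imp_le (L := Fin.cons (insertCut x (L 0) {a | ¬ x < a}) <|
      Fin.cons (insertCut x (L 0) {a | a < x}) fun j =>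
        insertCut x (L j.succ) (lowerCut x (L j.succ))) ?_ fun a b hab => ?_
  · simp only [Fin.forall_fin_succ, Fin.cons_zero, Fin.cons_succ]
    exact ⟨isLinearExtension_insertCut_not_gt (hL 0), isLinearExtension_insertCut_lt (hL 0),
      fun j => isLinearExtension_insertCut_lowerCut (hL _)⟩
  simp only [Fin.forall_fin_succ, Fin.cons_zero, Fin.cons_succ] at hab
  obtain ⟨hab_notGt, hab_lt, hab_cut⟩ := hab
  by_cases ha : a = x
  · subst ha
    by_cases hb : b = a
    · exact hb.ge
    · exact (not_not.1 (not_mem_of_insertCut_self_left hab_notGt hb)).le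
  by_cases hb : b = x
  · subst hb
    exact (mem_of_insertCut_self_right hab_lt ha).le
  by_contra hnab
  obtain ⟨i, hi⟩ : ∃ i, ¬ L i ⟨a, ha⟩ ⟨b, hb⟩ := by
    by_contra! hall
    exact hnab ((hiff _ _).2 hall)
  have hba : extendBot x (L i) b a :=
    (extendBot_of_ne hb ha).2 ((total_of (L i) _ _).resolve_left hi)
  have hne : a ≠ b := fun hab => hnab hab.le
  cases i using Fin.cases with
  | zero =>
    have hxb := (mem_not_mem_of_insertCut hab_notGt hba hne ha hb).2
    have hax := (mem_not_mem_of_insertCut hab_lt hba hne ha hb).1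
    exact hnab (hax.trans (not_not.1 hxb)).le
  | succ j =>
    obtain ⟨haC, hbC⟩ := mem_not_mem_of_insertCut (hab_cut j) hba hne ha hb
    exact hbC (mem_lowerCut_of_extendBot hba haC)

end Realizer

theorem stmt_7_general (α : Type*) [PartialOrder α] (x : α) :
    dimP α ≤ 1 + dimP ↥({x}ᶜ : Set α) := by
  by_cases h : ∃ d, 0 < d ∧ RealizerOfSize ({x}ᶜ : Set α) d
  · obtain ⟨hpos, hreal⟩ : 0 < dimP ({x}ᶜ : Set α) ∧ RealizerOfSize _ (dimP _) := Nat.sInf_mem h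
    obtain ⟨t, ht⟩ := Nat.exists_eq_add_one_of_ne_zero hpos.ne'
    rw [ht] at hreal ⊢
    rw [add_comm]
    exact Nat.sInf_le ⟨by omega, hreal.of_compl_singleton x⟩
  · have hα : {d | 0 < d ∧ RealizerOfSize α d} = ∅ :=
      Set.eq_empty_of_forall_notMem fun d ⟨hd, hreal⟩ => h ⟨d, hd, hreal.subtype _⟩
    simp [dimP, hα]

/-- For any finite poset `P` with at least 2 elements and any `x ∈ P`,
`dim P ≤ 1 + dim (P − {x})`. -/
theorem stmt_7 (α : Type*) [PartialOrder α] [Fintype α]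
    (hcard : 2 ≤ Fintype.card α) (x : α) :
    dimP α ≤ 1 + dimP ↥({x}ᶜ : Set α) :=
  stmt_7_general α x
end

section
/- If a ∈ Min(P), b ∈ Max(P), and a is incomparable with b in the finite poset P, then dim(P) ≤ 1 + dim(P − {a,b}). -/
section Aux

variable {α : Type*} [PartialOrder α]

lemma aux_base (α : Type*) [PartialOrder α] : ∃ s : α → α → Prop, IsLinearExtension s := by
  obtain ⟨s, hs, hle⟩ := extend_partialOrder ((· ≤ ·) : α → α → Prop)
  exact ⟨s, hs, fun x y h => hle x y h⟩

lemma aux_pair {u v : α} (h : ¬ u ≤ v) :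
    ∃ s : α → α → Prop, IsLinearExtension s ∧ s v u := by
  have hRpo : IsPartialOrder α (fun x y => x ≤ y ∨ (x ≤ v ∧ u ≤ y)) := by
    refine { refl := ?_, trans := ?_, antisymm := ?_ }
    · exact fun x => Or.inl le_rfl
    · rintro x y z (h1 | ⟨h1, h2⟩) (g1 | ⟨g1, g2⟩)
      · exact Or.inl (h1.trans g1)
      · exact Or.inr ⟨h1.trans g1, g2⟩
      · exact Or.inr ⟨h1, h2.trans g1⟩
      · exact absurd (h2.trans g1) h
    · rintro x y (h1 | ⟨h1, h2⟩) (g1 | ⟨g1, g2⟩)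
      · exact le_antisymm h1 g1
      · exact absurd (g2.trans (h1.trans g1)) h
      · exact absurd (h2.trans (g1.trans h1)) h
      · exact absurd (h2.trans g1) h
  haveI := hRpo
  obtain ⟨s, hs, hle⟩ := extend_partialOrder (fun x y => x ≤ y ∨ (x ≤ v ∧ u ≤ y))
  exact ⟨s, ⟨hs, fun x y hxy => hle x y (Or.inl hxy)⟩, hle v u (Or.inr ⟨le_rfl, le_rfl⟩)⟩

lemma exists_realizer (α : Type*) [PartialOrder α] [Finite α] :
    ∃ d, 0 < d ∧ RealizerOfSize α d := by
  obtain ⟨n, ⟨e⟩⟩ := Finite.exists_equiv_fin (α × α)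
  have hpair : ∀ p : α × α, ∃ s : α → α → Prop,
      IsLinearExtension s ∧ (¬ p.1 ≤ p.2 → s p.2 p.1) := by
    intro p
    by_cases h : p.1 ≤ p.2
    · obtain ⟨s, hs⟩ := aux_base α
      exact ⟨s, hs, fun h' => absurd h h'⟩
    · obtain ⟨s, hs, hvu⟩ := aux_pair h
      exact ⟨s, hs, fun _ => hvu⟩
  choose s hs1 hs2 using hpair
  obtain ⟨s0, hs0⟩ := aux_base α
  refine ⟨n + 1, Nat.succ_pos n,
    fun i => if h : (i : ℕ) < n then s (e.symm ⟨i, h⟩) else s0, fun i => ?_, fun x y => ?_⟩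
  · show IsLinearExtension (if h : (i : ℕ) < n then s (e.symm ⟨i, h⟩) else s0)
    by_cases hc : (i : ℕ) < n
    · rw [dif_pos hc]; exact hs1 _
    · rw [dif_neg hc]; exact hs0
  constructor
  · intro hxy i
    show (if h : (i : ℕ) < n then s (e.symm ⟨i, h⟩) else s0) x y
    by_cases hc : (i : ℕ) < n
    · rw [dif_pos hc]; exact (hs1 _).2 x y hxy
    · rw [dif_neg hc]; exact hs0.2 x y hxy
  · intro h
    by_contra hxy
    have hi : ((e (x, y) : Fin n) : ℕ) < n := (e (x, y)).isLt
    have h1 : (if h : ((e (x, y) : Fin n) : ℕ) < n then s (e.symm ⟨(e (x, y) : ℕ), h⟩) else s0)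
        x y := h ⟨(e (x, y) : ℕ), Nat.lt_succ_of_lt hi⟩
    rw [dif_pos hi] at h1
    have hsymm : e.symm ⟨((e (x, y) : Fin n) : ℕ), hi⟩ = (x, y) := by
      rw [Fin.eta]; exact e.symm_apply_apply _
    rw [hsymm] at h1
    have h2 : s (x, y) y x := hs2 (x, y) hxy
    haveI := (hs1 (x, y)).1
    exact hxy (le_of_eq (antisymm (r := s (x, y)) h1 h2))

end Aux

lemma step_realizer {α : Type*} [PartialOrder α] {a b : α}
    (ha : IsMin a) (hb : IsMax b) (hab1 : ¬ a ≤ b) (hab2 : ¬ b ≤ a)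
    {d : ℕ} (hd0 : 0 < d) (hreal : RealizerOfSize ↥({a, b}ᶜ : Set α) d) :
    RealizerOfSize α (1 + d) := by
  obtain ⟨L, hL, hLr⟩ := hreal
  have hne : a ≠ b := fun h => hab1 (h ▸ le_refl a)
  have hmem : ∀ x : α, x ∈ ({a, b}ᶜ : Set α) ↔ x ≠ a ∧ x ≠ b := by
    intro x; simp
  have haS : a ∉ ({a, b}ᶜ : Set α) := fun h => ((hmem a).mp h).1 rfl
  have hbS : b ∉ ({a, b}ᶜ : Set α) := fun h => ((hmem b).mp h).2 rfl
  -- the special linear extension M with b below a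
  have hRpo : IsPartialOrder α (fun x y =>
      x ≤ y ∨ (¬ a ≤ x ∧ a ≤ y) ∨ (x ≤ b ∧ ¬ y ≤ b) ∨ (x ≤ b ∧ a ≤ y)) := by
    refine { refl := ?_, trans := ?_, antisymm := ?_ }
    · exact fun x => Or.inl le_rfl
    · rintro x y z (h1 | ⟨h1, h2⟩ | ⟨h1, h2⟩ | ⟨h1, h2⟩)
        (g1 | ⟨g1, g2⟩ | ⟨g1, g2⟩ | ⟨g1, g2⟩)
      · exact Or.inl (h1.trans g1)
      · exact Or.inr (Or.inl ⟨fun h => g1 (h.trans h1), g2⟩)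
      · exact Or.inr (Or.inr (Or.inl ⟨h1.trans g1, g2⟩))
      · exact Or.inr (Or.inr (Or.inr ⟨h1.trans g1, g2⟩))
      · exact Or.inr (Or.inl ⟨h1, h2.trans g1⟩)
      · exact absurd h2 g1
      · exact absurd (h2.trans g1) hab1
      · exact absurd (h2.trans g1) hab1
      · exact Or.inr (Or.inr (Or.inl ⟨h1, fun h => h2 (g1.trans h)⟩))
      · exact Or.inr (Or.inr (Or.inr ⟨h1, g2⟩))
      · exact absurd g1 h2
      · exact absurd g1 h2
      · exact Or.inr (Or.inr (Or.inr ⟨h1, h2.trans g1⟩))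
      · exact absurd h2 g1
      · exact absurd (h2.trans g1) hab1
      · exact absurd (h2.trans g1) hab1
    · rintro x y (h1 | ⟨h1, h2⟩ | ⟨h1, h2⟩ | ⟨h1, h2⟩)
        (g1 | ⟨g1, g2⟩ | ⟨g1, g2⟩ | ⟨g1, g2⟩)
      · exact le_antisymm h1 g1
      · exact absurd (g2.trans h1) g1
      · exact absurd (h1.trans g1) g2
      · exact absurd ((g2.trans h1).trans g1) hab1
      · exact absurd (h2.trans g1) h1
      · exact absurd h2 g1
      · exact absurd (h2.trans g1) hab1
      · exact absurd g2 h1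
      · exact absurd (g1.trans h1) h2
      · exact absurd (g2.trans h1) hab1
      · exact absurd g1 h2
      · exact absurd g1 h2
      · exact absurd ((h2.trans g1).trans h1) hab1
      · exact absurd h2 g1
      · exact absurd (h2.trans g1) hab1
      · exact absurd (h2.trans g1) hab1
  haveI := hRpo
  obtain ⟨M, hM, hRM⟩ := extend_partialOrder (fun x y =>
      x ≤ y ∨ (¬ a ≤ x ∧ a ≤ y) ∨ (x ≤ b ∧ ¬ y ≤ b) ∨ (x ≤ b ∧ a ≤ y))
  have hMext : IsLinearExtension M := ⟨hM, fun x y h => hRM x y (Or.inl h)⟩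
  -- lifting a linear extension of the subposet to α : put a at the bottom, b at the top
  set Tl : (↥({a, b}ᶜ : Set α) → ↥({a, b}ᶜ : Set α) → Prop) → α → α → Prop := fun t x y =>
    x = a ∨ y = b ∨
      (∃ hx : x ∈ ({a, b}ᶜ : Set α), ∃ hy : y ∈ ({a, b}ᶜ : Set α), t ⟨x, hx⟩ ⟨y, hy⟩) ∨
      x = y with hTldef
  have hTl : ∀ t, IsLinearExtension t → IsLinearExtension (Tl t) := by
    intro t ht
    haveI := ht.1
    constructor
    · refine { refl := ?_, trans := ?_, antisymm := ?_, total := ?_ }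
      · exact fun x => Or.inr (Or.inr (Or.inr rfl))
      · rintro x y z h1 h2
        rcases h1 with hxa | hyb | ⟨hx, hy, h1⟩ | hxy
        · exact Or.inl hxa
        · rcases h2 with hya | hzb | ⟨hy', hz, h3⟩ | hyz
          · exact absurd (hya.symm.trans hyb) hne
          · exact Or.inr (Or.inl hzb)
          · exact absurd (hyb ▸ hy') hbS
          · exact Or.inr (Or.inl (hyz.symm.trans hyb))
        · rcases h2 with hya | hzb | ⟨hy', hz, h3⟩ | hyz
          · exact absurd (hya ▸ hy) haS
          · exact Or.inr (Or.inl hzb)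
          · exact Or.inr (Or.inr (Or.inl ⟨hx, hz, Trans.trans h1 h3⟩))
          · cases hyz
            exact Or.inr (Or.inr (Or.inl ⟨hx, hy, h1⟩))
        · cases hxy
          exact h2
      · rintro x y h1 h2
        rcases h1 with hxa | hyb | ⟨hx, hy, h1⟩ | hxy
        · rcases h2 with hya | hxb | ⟨hy', hx', h3⟩ | hyx
          · exact hxa.trans hya.symm
          · exact absurd (hxa.symm.trans hxb) hne
          · exact absurd (hxa ▸ hx') haS
          · exact hyx.symm
        · rcases h2 with hya | hxb | ⟨hy', hx', h3⟩ | hyx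
          · exact absurd (hya.symm.trans hyb) hne
          · exact hxb.trans hyb.symm
          · exact absurd (hyb ▸ hy') hbS
          · exact hyx.symm
        · rcases h2 with hya | hxb | ⟨hy', hx', h3⟩ | hyx
          · exact absurd (hya ▸ hy) haS
          · exact absurd (hxb ▸ hx) hbS
          · exact congrArg Subtype.val (_root_.antisymm (r := t) h1 h3)
          · exact hyx.symm
        · exact hxy
      · intro x y
        by_cases hx : x = a
        · exact Or.inl (Or.inl hx)
        by_cases hy : y = a
        · exact Or.inr (Or.inl hy)
        by_cases hxb : x = b
        · exact Or.inr (Or.inr (Or.inl hxb))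
        by_cases hyb : y = b
        · exact Or.inl (Or.inr (Or.inl hyb))
        have hxS : x ∈ ({a, b}ᶜ : Set α) := (hmem x).mpr ⟨hx, hxb⟩
        have hyS : y ∈ ({a, b}ᶜ : Set α) := (hmem y).mpr ⟨hy, hyb⟩
        rcases total_of t ⟨x, hxS⟩ ⟨y, hyS⟩ with h | h
        · exact Or.inl (Or.inr (Or.inr (Or.inl ⟨hxS, hyS, h⟩)))
        · exact Or.inr (Or.inr (Or.inr (Or.inl ⟨hyS, hxS, h⟩)))
    · intro x y hxy
      by_cases hx : x = a
      · exact Or.inl hx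
      by_cases hyb : y = b
      · exact Or.inr (Or.inl hyb)
      by_cases hxb : x = b
      · have hby : b ≤ y := hxb ▸ hxy
        exact Or.inr (Or.inl (le_antisymm (hb hby) hby))
      by_cases hy : y = a
      · have hxa' : x ≤ a := hy ▸ hxy
        exact absurd (le_antisymm hxa' (ha hxa')) hx
      have hxS : x ∈ ({a, b}ᶜ : Set α) := (hmem x).mpr ⟨hx, hxb⟩
      have hyS : y ∈ ({a, b}ᶜ : Set α) := (hmem y).mpr ⟨hy, hyb⟩
      exact Or.inr (Or.inr (Or.inl ⟨hxS, hyS, ht.2 _ _ (Subtype.mk_le_mk.mpr hxy)⟩))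
  -- the realizer for α of size 1 + d
  refine ⟨fun i => if h : (i : ℕ) < d then Tl (L ⟨i, h⟩) else M, fun i => ?_, fun x y => ?_⟩
  · show IsLinearExtension (if h : (i : ℕ) < d then Tl (L ⟨i, h⟩) else M)
    by_cases hc : (i : ℕ) < d
    · rw [dif_pos hc]; exact hTl _ (hL _)
    · rw [dif_neg hc]; exact hMext
  constructor
  · intro hxy i
    show (if h : (i : ℕ) < d then Tl (L ⟨i, h⟩) else M) x y
    by_cases hc : (i : ℕ) < d
    · rw [dif_pos hc]; exact (hTl _ (hL _)).2 x y hxy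
    · rw [dif_neg hc]; exact hMext.2 x y hxy
  · intro h
    have hMxy : M x y := by
      have h1 : (if hc : d < d then Tl (L ⟨d, hc⟩) else M) x y := h ⟨d, lt_one_add d⟩
      rwa [dif_neg (lt_irrefl d)] at h1
    have hT0 : Tl (L ⟨0, hd0⟩) x y := by
      have h1 : (if hc : 0 < d then Tl (L ⟨0, hc⟩) else M) x y :=
        h ⟨0, Nat.lt_of_lt_of_le hd0 (Nat.le_add_left d 1)⟩
      rwa [dif_pos hd0] at h1
    haveI := hM
    rcases eq_or_ne x y with rfl | hxy
    · exact le_refl x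
    by_cases hxa : x = a
    · by_cases hay : a ≤ y
      · exact hxa.le.trans hay
      · have h1 : M y a := hRM y a (Or.inr (Or.inl ⟨hay, le_rfl⟩))
        have h2 : M y x := by rw [hxa]; exact h1
        exact absurd (antisymm (r := M) hMxy h2) hxy
    by_cases hyb : y = b
    · by_cases hxb : x ≤ b
      · exact hxb.trans hyb.ge
      · have h1 : M b x := hRM b x (Or.inr (Or.inr (Or.inl ⟨le_rfl, hxb⟩)))
        have h2 : M y x := by rw [hyb]; exact h1
        exact absurd (antisymm (r := M) hMxy h2) hxy
    by_cases hxb : x = b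
    · exfalso
      rcases hT0 with h1 | h1 | ⟨hx', _, _⟩ | h1
      · exact hxa h1
      · exact hyb h1
      · exact ((hmem x).mp hx').2 hxb
      · exact hxy h1
    by_cases hya : y = a
    · exfalso
      rcases hT0 with h1 | h1 | ⟨_, hy', _⟩ | h1
      · exact hxa h1
      · exact hyb h1
      · exact ((hmem y).mp hy').1 hya
      · exact hxy h1
    have hxS : x ∈ ({a, b}ᶜ : Set α) := (hmem x).mpr ⟨hxa, hxb⟩
    have hyS : y ∈ ({a, b}ᶜ : Set α) := (hmem y).mpr ⟨hya, hyb⟩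
    have hsub : (⟨x, hxS⟩ : ↥({a, b}ᶜ : Set α)) ≤ ⟨y, hyS⟩ := by
      rw [hLr]
      intro i
      have hi : (i : ℕ) < d := i.isLt
      have hthis : (if hc : (i : ℕ) < d then Tl (L ⟨(i : ℕ), hc⟩) else M) x y :=
        h ⟨(i : ℕ), Nat.lt_of_lt_of_le hi (Nat.le_add_left d 1)⟩
      rw [dif_pos hi] at hthis
      rcases hthis with h1 | h1 | ⟨hx', hy', h1⟩ | h1
      · exact absurd h1 hxa
      · exact absurd h1 hyb
      · have h2 : L ⟨(i : ℕ), hi⟩ ⟨x, hxS⟩ ⟨y, hyS⟩ := h1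
        rwa [Fin.eta] at h2
      · exact absurd h1 hxy
    exact Subtype.mk_le_mk.mp hsub

/-- If `a` is minimal, `b` is maximal and `a ∥ b` in the finite poset `P`, then
`dim P ≤ 1 + dim (P − {a, b})`. -/
theorem stmt_8 (α : Type*) [PartialOrder α] [Fintype α]
    (a b : α) (ha : IsMin a) (hb : IsMax b) (hab : Incomp a b) :
    dimP α ≤ 1 + dimP ↥({a, b}ᶜ : Set α) := by
  obtain ⟨hab1, hab2⟩ := hab
  have hdmem : (0 < dimP ↥({a, b}ᶜ : Set α)) ∧
      RealizerOfSize ↥({a, b}ᶜ : Set α) (dimP ↥({a, b}ᶜ : Set α)) := by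
    have := Nat.sInf_mem (s := {k | 0 < k ∧ RealizerOfSize ↥({a, b}ᶜ : Set α) k})
      (by obtain ⟨k, hk⟩ := exists_realizer ↥({a, b}ᶜ : Set α); exact ⟨k, hk⟩)
    exact this
  obtain ⟨hd0, hreal⟩ := hdmem
  have hreal' : RealizerOfSize α (1 + dimP ↥({a, b}ᶜ : Set α)) :=
    step_realizer ha hb hab1 hab2 hd0 hreal
  have hgoal : 1 + dimP ↥({a, b}ᶜ : Set α) ∈ {k | 0 < k ∧ RealizerOfSize α k} :=
    ⟨by omega, hreal'⟩
  exact Nat.sInf_le hgoal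
end

section
/- For any finite poset P which is not a chain, dim(P) ≤ width(P). -/
/-!
By Dilworth's theorem `α` is partitioned into `w` chains, `w` the width. For a chain `C`, adding to
`≤` the relations `y < c` for `c ∈ C` with `c ≰ y` still gives a partial order, so some linear
extension `L_C` puts every `c ∈ C` above everything not above `c`. If `x ≰ y` and `x ∈ C`, then
`y <_{L_C} x`; hence the `w` extensions `L_C` realize the order.

Dilworth's theorem is proved by Galvin's induction. Let `m` be maximal and colour the rest by
`w` chains. If the rest still has `w`-antichains, each meets every colour once, and for each colour
the greatest element lying on such an antichain gives a `w`-antichain `A`. As `A ∪ {m}` is not an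
antichain, some `a ∈ A` lies below `m`; removing `m` together with the elements of `a`'s colour
below `a` destroys every `w`-antichain, and the remainder is coloured by `w - 1` chains.
-/

section

open Finset

variable {α : Type*} [PartialOrder α]

def AboveChain (C : Set α) (x y : α) : Prop :=
  x ≤ y ∨ ∃ c ∈ C, ¬ c ≤ x ∧ c ≤ y

theorem isPartialOrder_aboveChain {C : Set α} (hC : IsChain (· ≤ ·) C) :
    IsPartialOrder α (AboveChain C) where
  refl x := Or.inl le_rfl
  trans x y z := by
    rintro (hxy | ⟨c, hc, hcx, hcy⟩) (hyz | ⟨d, hd, hdy, hdz⟩)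
    · exact Or.inl (hxy.trans hyz)
    · exact Or.inr ⟨d, hd, fun hdx => hdy (hdx.trans hxy), hdz⟩
    · exact Or.inr ⟨c, hc, hcx, hcy.trans hyz⟩
    · have hcd : c ≤ d := (hC.total hc hd).resolve_right fun hdc => hdy (hdc.trans hcy)
      exact Or.inr ⟨d, hd, fun hdx => hcx (hcd.trans hdx), hdz⟩
  antisymm x y := by
    rintro (hxy | ⟨c, hc, hcx, hcy⟩) (hyx | ⟨d, hd, hdy, hdx⟩)
    · exact le_antisymm hxy hyx
    · exact (hdy (hdx.trans hxy)).elim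
    · exact (hcx (hcy.trans hyx)).elim
    · rcases hC.total hc hd with hcd | hdc
      · exact (hcx (hcd.trans hdx)).elim
      · exact (hdy (hdc.trans hcy)).elim

theorem IsChain.exists_linearExtension_above {C : Set α} (hC : IsChain (· ≤ ·) C) :
    ∃ r, IsLinearExtension r ∧ ∀ x ∈ C, ∀ y, ¬ x ≤ y → r y x := by
  have := isPartialOrder_aboveChain hC
  obtain ⟨r, hr, hle⟩ := extend_partialOrder (AboveChain C)
  exact ⟨r, ⟨hr, fun x y h => hle _ _ (Or.inl h)⟩,
    fun x hx y hxy => hle _ _ (Or.inr ⟨x, hx, hxy, le_rfl⟩)⟩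

theorem IsChain.exists_isGreatest {s : Set α} (hc : IsChain (· ≤ ·) s) (hfin : s.Finite)
    (hs : s.Nonempty) : ∃ a, IsGreatest s a := by
  obtain ⟨a, ha⟩ := hfin.exists_maximal hs
  exact ⟨a, ha.1, fun b hb => (hc.total hb ha.1).elim id (ha.2 hb)⟩

/-- A partition of `s` into `k` chains, given by the colour `f x < k` of each `x ∈ s`. -/
structure IsChainPartition (s : Set α) (k : ℕ) (f : α → ℕ) : Prop where
  lt : ∀ x ∈ s, f x < k
  le_or_le : ∀ x ∈ s, ∀ y ∈ s, f x = f y → x ≤ y ∨ y ≤ x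

namespace IsChainPartition

variable {s t K : Set α} {k : ℕ} {f : α → ℕ}

theorem isChain (hf : IsChainPartition s k f) (i : ℕ) : IsChain (· ≤ ·) {x ∈ s | f x = i} :=
  fun x hx y hy _ => hf.le_or_le x hx.1 y hy.1 (hx.2.trans hy.2.symm)

theorem exists_union_chain (hf : IsChainPartition t k f) (hK : IsChain (· ≤ ·) K) :
    ∃ g, IsChainPartition (t ∪ K) (k + 1) g := by
  classical
  refine ⟨fun x => if x ∈ K then k else f x, fun x hx => ?_, fun x hx y hy hxy => ?_⟩
  · split_ifs with hxK
    · exact k.lt_succ_self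
    · exact (hf.lt x (hx.resolve_right hxK)).trans k.lt_succ_self
  · by_cases hxK : x ∈ K <;> by_cases hyK : y ∈ K <;>
      simp only [hxK, hyK, if_true, if_false] at hxy
    · exact hK.total hxK hyK
    · exact absurd hxy (hf.lt y (hy.resolve_right hyK)).ne'
    · exact absurd hxy (hf.lt x (hx.resolve_right hxK)).ne
    · exact hf.le_or_le x (hx.resolve_right hxK) y (hy.resolve_right hyK) hxy

theorem exists_mem_antichain {t B : Finset α} (hf : IsChainPartition t k f) (hBt : B ⊆ t)
    (hB : IsAntichain (· ≤ ·) (B : Set α)) (hBk : B.card = k) {i : ℕ} (hi : i < k) :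
    ∃ x ∈ B, f x = i := by
  have hinj : Set.InjOn f B := fun x hx y hy hxy => by
    by_contra hne
    rcases hf.le_or_le x (hBt hx) y (hBt hy) hxy with h | h
    exacts [hB hx hy hne h, hB hy hx (Ne.symm hne) h]
  have himage : B.image f = range k :=
    eq_of_subset_of_card_le (image_subset_iff.2 fun x hx => mem_range.2 (hf.lt x (hBt hx)))
      (by rw [card_range, card_image_of_injOn hinj, hBk])
  have hi' : i ∈ B.image f := himage ▸ mem_range.2 hi
  exact mem_image.1 hi'

theorem exists_antichain_dominating [DecidableEq α] {t : Finset α} (hf : IsChainPartition t k f)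
    (hA : ∃ A ⊆ t, IsAntichain (· ≤ ·) (A : Set α) ∧ A.card = k) :
    ∃ A ⊆ t, IsAntichain (· ≤ ·) (A : Set α) ∧ A.card = k ∧
      ∀ B ⊆ t, IsAntichain (· ≤ ·) (B : Set α) → B.card = k →
        ∀ y ∈ B, ∀ x ∈ A, f y = f x → y ≤ x := by
  obtain ⟨A₀, hA₀t, hA₀, hA₀k⟩ := hA
  let S (i : ℕ) : Set α := {y | y ∈ t ∧ f y = i ∧
    ∃ B ⊆ t, IsAntichain (· ≤ ·) (B : Set α) ∧ B.card = k ∧ y ∈ B}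
  have hS (i : Fin k) : ∃ a, IsGreatest (S i) a := by
    have hSi : S i ⊆ {y ∈ (t : Set α) | f y = i} := fun y hy => ⟨hy.1, hy.2.1⟩
    refine ((hf.isChain i).mono hSi).exists_isGreatest
      (t.finite_toSet.subset fun y hy => hy.1) ?_
    obtain ⟨y, hyA, hy⟩ := hf.exists_mem_antichain hA₀t hA₀ hA₀k i.2
    exact ⟨y, hA₀t hyA, hy, A₀, hA₀t, hA₀, hA₀k, hyA⟩
  choose a ha using hS
  have hfa (i : Fin k) : f (a i) = i := (ha i).1.2.1
  have hdom : ∀ B ⊆ t, IsAntichain (· ≤ ·) (B : Set α) → B.card = k →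
      ∀ y ∈ B, ∀ i : Fin k, f y = i → y ≤ a i := fun B hBt hB hBk y hyB i hy =>
    (ha i).2 ⟨hBt hyB, hy, B, hBt, hB, hBk, hyB⟩
  refine ⟨univ.image a, ?_, ?_, ?_, ?_⟩
  · simpa [image_subset_iff] using fun i => (ha i).1.1
  · simp only [coe_image, coe_univ, Set.image_univ]
    rintro _ ⟨i, rfl⟩ _ ⟨j, rfl⟩ hne hij
    obtain ⟨B, hBt, hB, hBk, hjB⟩ := (ha j).1.2.2
    obtain ⟨y, hyB, hy⟩ := hf.exists_mem_antichain hBt hB hBk i.2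
    refine hB hyB hjB (fun hyj => hne ?_) ((hdom B hBt hB hBk y hyB i hy).trans hij)
    have hij : (i : ℕ) = j := by rw [← hy, hyj, hfa]
    rw [Fin.ext hij]
  · rw [card_image_of_injective _ fun i j hij => Fin.ext (by rw [← hfa i, ← hfa j, hij]),
      card_univ, Fintype.card_fin]
  · simp only [mem_image, mem_univ, true_and]
    rintro B hBt hB hBk y hyB _ ⟨i, rfl⟩ hy
    exact hdom B hBt hB hBk y hyB i (hy.trans (hfa i))

end IsChainPartition

theorem realizerOfSize_of_isChainPartition {k : ℕ} {f : α → ℕ}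
    (hf : IsChainPartition Set.univ k f) : RealizerOfSize α k := by
  choose L hL hLabove using fun i : Fin k => (hf.isChain i).exists_linearExtension_above
  refine ⟨L, hL, fun x y => ⟨fun hxy i => (hL i).2 x y hxy, fun h => ?_⟩⟩
  by_contra hxy
  let i : Fin k := ⟨f x, hf.lt x trivial⟩
  have := (hL i).1
  exact hxy (antisymm (r := L i) (h i) (hLabove i x ⟨trivial, rfl⟩ y hxy) ▸ le_rfl)

section Dilworth

variable [DecidableEq α] {s : Finset α} {k : ℕ} {f : α → ℕ}

theorem Maximal.exists_le_of_antichain {m : α} (hm : Maximal (· ∈ s) m) {A : Finset α}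
    (hAs : A ⊆ s.erase m) (hA : IsAntichain (· ≤ ·) (A : Set α))
    (h : ∀ B ⊆ s, IsAntichain (· ≤ ·) (B : Set α) → B.card ≤ A.card) : ∃ x ∈ A, x ≤ m := by
  by_contra! hA_not_le
  have hmA : m ∉ A := fun hmA => (mem_erase.1 (hAs hmA)).1 rfl
  have hins : IsAntichain (· ≤ ·) (insert m A : Set α) :=
    hA.insert (fun b hb _ => hA_not_le b hb)
      (fun b hb _ hmb => hA_not_le b hb (hm.2 (mem_of_mem_erase (hAs hb)) hmb))
  have := h (insert m A) (insert_subset hm.1 (hAs.trans (erase_subset m s))) (by simpa using hins)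
  rw [card_insert_of_notMem hmA] at this
  omega

theorem Maximal.exists_chain_lowering_width {m : α} (hm : Maximal (· ∈ s) m)
    (h : ∀ B ⊆ s, IsAntichain (· ≤ ·) (B : Set α) → B.card ≤ k + 1)
    (hf : IsChainPartition (s.erase m : Set α) (k + 1) f) :
    ∃ K ⊆ s, m ∈ K ∧ IsChain (· ≤ ·) (K : Set α) ∧
      ∀ B ⊆ s \ K, IsAntichain (· ≤ ·) (B : Set α) → B.card ≤ k := by
  classical
  by_cases hsmall : ∀ B ⊆ s.erase m, IsAntichain (· ≤ ·) (B : Set α) → B.card ≤ k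
  · refine ⟨{m}, singleton_subset_iff.2 hm.1, mem_singleton_self m, by simp, ?_⟩
    rwa [sdiff_singleton_eq_erase]
  push Not at hsmall
  obtain ⟨B₀, hB₀t, hB₀, hB₀k⟩ := hsmall
  obtain ⟨A, hAt, hA, hAk, hdom⟩ := hf.exists_antichain_dominating
    ⟨B₀, hB₀t, hB₀, le_antisymm (h B₀ (hB₀t.trans (erase_subset m s)) hB₀) hB₀k⟩
  obtain ⟨x, hxA, hxm⟩ := hm.exists_le_of_antichain hAt hA (hAk ▸ h)
  set K := insert m ((s.erase m).filter fun y => f y = f x ∧ y ≤ x)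
  refine ⟨K, insert_subset hm.1 ((filter_subset _ _).trans (erase_subset m s)),
    mem_insert_self _ _, ?_, fun B hBK hB => ?_⟩
  · rw [coe_insert]
    refine ((hf.isChain (f x)).mono fun y hy => ?_).insert
      fun y hy _ => Or.inr ((mem_filter.1 hy).2.2.trans hxm)
    simp only [coe_filter, Set.mem_ofPred_eq] at hy
    exact ⟨hy.1, hy.2.1⟩
  by_contra! hBk
  have hBt : B ⊆ s.erase m := fun y hy =>
    mem_erase.2 ⟨fun hym => (mem_sdiff.1 (hBK hy)).2 (hym ▸ mem_insert_self m _),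
      (mem_sdiff.1 (hBK hy)).1⟩
  have hBk' := le_antisymm (h B (hBt.trans (erase_subset m s)) hB) hBk
  obtain ⟨y, hyB, hy⟩ := hf.exists_mem_antichain hBt hB hBk' (hf.lt x (hAt hxA))
  exact (mem_sdiff.1 (hBK hyB)).2 (mem_insert_of_mem
    (mem_filter.2 ⟨hBt hyB, hy, hdom B hBt hB hBk' y hyB x hxA hy⟩))

/-- Dilworth's theorem. -/
theorem exists_isChainPartition_of_antichain_card_le (s : Finset α) (k : ℕ)
    (h : ∀ B ⊆ s, IsAntichain (· ≤ ·) (B : Set α) → B.card ≤ k) :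
    ∃ f, IsChainPartition (s : Set α) k f := by
  induction s using Finset.strongInduction generalizing k with
  | H s ih =>
  rcases s.eq_empty_or_nonempty with rfl | hne
  · exact ⟨0, by simp, by simp⟩
  obtain ⟨m, hm⟩ := s.exists_maximal hne
  obtain ⟨j, rfl⟩ : ∃ j, k = j + 1 :=
    Nat.exists_eq_add_one_of_ne_zero <| Nat.one_le_iff_ne_zero.1 <| by
      simpa using h {m} (singleton_subset_iff.2 hm.1) (by simp)
  obtain ⟨f, hf⟩ := ih (s.erase m) (erase_ssubset hm.1) (j + 1)
    fun B hB => h B (hB.trans (erase_subset m s))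
  obtain ⟨K, hKs, hmK, hK, hwidth⟩ := hm.exists_chain_lowering_width h hf
  obtain ⟨g, hg⟩ := ih (s \ K) (sdiff_ssubset hKs ⟨m, hmK⟩) j hwidth
  simpa [Set.sdiff_union_of_subset (coe_subset.2 hKs)] using hg.exists_union_chain hK

end Dilworth

end

/-- For any finite poset `P` which is not a chain, `dim P ≤ width P`,
where the width is the maximum size of an antichain. -/
theorem stmt_9 (α : Type*) [PartialOrder α] [Fintype α]
    (hnotchain : ¬ ∀ x y : α, x ≤ y ∨ y ≤ x) :
    dimP α ≤ sSup {k : ℕ | ∃ s : Finset α, IsAntichain (· ≤ ·) (s : Set α) ∧ s.card = k} := by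
  classical
  obtain ⟨x₀, -⟩ := not_forall.1 hnotchain
  have hbdd : BddAbove {k : ℕ | ∃ s : Finset α, IsAntichain (· ≤ ·) (s : Set α) ∧ s.card = k} :=
    ⟨Fintype.card α, by rintro _ ⟨s, -, rfl⟩; exact s.card_le_univ⟩
  obtain ⟨f, hf⟩ := exists_isChainPartition_of_antichain_card_le Finset.univ _
    fun B _ hB => le_csSup hbdd ⟨B, hB, rfl⟩
  rw [Finset.coe_univ] at hf
  exact Nat.sInf_le ⟨Nat.zero_lt_of_lt (hf.lt x₀ trivial), realizerOfSize_of_isChainPartition hf⟩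
end

section
/- Let P be a finite poset and let (x,y) be an incomparable pair in P. Then the set S = {(x,u) : x incomparable with u} ∪ {(v,y) : v incomparable with y} of incomparable pairs is reversible, i.e., there exists a single linear extension L of P with x > u in L for all u incomparable with x, and v > y in L for all v incomparable with y. -/
lemma aux_up {α : Type*} (R : α → α → Prop) (hR : IsPartialOrder α R) (x : α) :
    IsPartialOrder α (fun a b => R a b ∨ (R x b ∧ ¬ R x a)) where
  refl a := Or.inl (hR.refl a)
  trans := by
    rintro a b c (hab | ⟨hxb, hxa⟩) (hbc | ⟨hxc, hxb'⟩)
    · exact Or.inl (hR.trans _ _ _ hab hbc)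
    · exact Or.inr ⟨hxc, fun h => hxb' (hR.trans _ _ _ h hab)⟩
    · exact Or.inr ⟨hR.trans _ _ _ hxb hbc, hxa⟩
    · exact absurd hxb hxb'
  antisymm := by
    intro a b hab hba
    rcases hab with hab | ⟨hxb, hxa⟩ <;> rcases hba with hba | ⟨hxa', hxb'⟩
    · exact hR.antisymm _ _ hab hba
    · exact absurd (hR.trans _ _ _ hxa' hab) hxb'
    · exact absurd (hR.trans _ _ _ hxb hba) hxa
    · exact absurd hxb hxb'

lemma aux_down {α : Type*} (R : α → α → Prop) (hR : IsPartialOrder α R) (y : α) :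
    IsPartialOrder α (fun a b => R a b ∨ (R a y ∧ ¬ R b y)) where
  refl a := Or.inl (hR.refl a)
  trans := by
    rintro a b c (hab | ⟨hay, hby⟩) (hbc | ⟨hby', hcy⟩)
    · exact Or.inl (hR.trans _ _ _ hab hbc)
    · exact Or.inr ⟨hR.trans _ _ _ hab hby', hcy⟩
    · exact Or.inr ⟨hay, fun h => hby (hR.trans _ _ _ hbc h)⟩
    · exact absurd hby' hby
  antisymm := by
    intro a b hab hba
    rcases hab with hab | ⟨hay, hby⟩ <;> rcases hba with hba | ⟨hby', hay'⟩
    · exact hR.antisymm _ _ hab hba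
    · exact absurd (hR.trans _ _ _ hab hby') hay'
    · exact absurd (hR.trans _ _ _ hba hay) hby
    · exact absurd hay hay'

/-- Given an incomparable pair `(x, y)` in a finite poset `P`, the set
`S = {(x,u) : x ∥ u} ∪ {(v,y) : v ∥ y}` is reversible: there is a single
linear extension `L` putting `x` above every `u` incomparable with `x`
and `y` above every `v` incomparable with `y`. -/
theorem stmt_10 (α : Type*) [PartialOrder α] [Fintype α]
    (x y : α) (hxy : Incomp x y) :
    ∃ r : α → α → Prop, IsLinearExtension r ∧
      (∀ u, Incomp x u → r u x) ∧ (∀ v, Incomp v y → r y v) := by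
  obtain ⟨hxy1, hxy2⟩ := hxy
  -- Step 1: push `x` up
  set Q1 : α → α → Prop := fun a b => a ≤ b ∨ (x ≤ b ∧ ¬ x ≤ a) with hQ1
  have hPQ1 : IsPartialOrder α Q1 := by
    have : IsPartialOrder α (· ≤ ·) :=
      { refl := le_refl, trans := fun _ _ _ => le_trans,
        antisymm := fun _ _ => le_antisymm }
    exact aux_up (· ≤ ·) this x
  -- Step 2: push `y` down
  set Q2 : α → α → Prop := fun a b => Q1 a b ∨ (Q1 a y ∧ ¬ Q1 b y) with hQ2
  have hPQ2 : IsPartialOrder α Q2 := aux_down Q1 hPQ1 y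
  obtain ⟨s, hs, hQs⟩ := @extend_partialOrder α Q2 hPQ2
  refine ⟨s, ⟨hs, fun a b hab => hQs _ _ (Or.inl (Or.inl hab))⟩, ?_, ?_⟩
  · intro u ⟨h1, h2⟩
    exact hQs _ _ (Or.inl (Or.inr ⟨le_refl x, h1⟩))
  · intro v ⟨h1, h2⟩
    refine hQs _ _ (Or.inr ⟨Or.inl (le_refl y), ?_⟩)
    rintro (h | ⟨hxv, -⟩)
    · exact h1 h
    · exact hxy1 hxv
end

section
/- A set S of incomparable pairs of a finite poset P is reversible (there is a single linear extension reversing every pair of S) if and only if S contains no alternating cycle. -/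
/-! A linear extension `L` reversing `S` satisfies `x ≤ b <_L a ≤ y` whenever `x ≤ b` and
`a ≤ y` for some `(a, b) ∈ S`. Call this an alternating step from `x` to `y`; alternating
cycles are exactly the closed walks of alternating steps, so a reversing extension forbids them.
Conversely, if no walk of alternating steps is closed, then "`x ≤ y` or `y` is reachable from `x`
by alternating steps" is a partial order containing `≤` and every reversed pair of `S`, and any
linear extension of it (Szpilrajn) reverses `S`. -/

open Relation

namespace Relation

variable {β : Type*} {r : β → β → Prop}

theorem ReflTransGen.exists_fin_path {a b : β} (h : ReflTransGen r a b) :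
    ∃ (n : ℕ) (g : Fin (n + 1) → β), g 0 = a ∧ g (Fin.last n) = b ∧
      ∀ i : Fin n, r (g i.castSucc) (g i.succ) := by
  induction h using ReflTransGen.head_induction_on with
  | refl => exact ⟨0, fun _ => b, rfl, rfl, Fin.elim0⟩
  | head hac _ ih =>
    obtain ⟨n, g, hg0, hglast, hg⟩ := ih
    refine ⟨n + 1, Fin.cons _ g, rfl, by rw [Fin.cons_last, hglast], fun i => ?_⟩
    cases i using Fin.cases with
    | zero => simpa [hg0] using hac
    | succ j => simpa [← Fin.succ_castSucc] using hg j

theorem exists_transGen_self_iff_exists_fin_cycle :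
    (∃ a, TransGen r a a) ↔ ∃ (n : ℕ) (g : Fin (n + 2) → β), ∀ i, r (g i) (g (i + 1)) := by
  constructor
  · rintro ⟨a, h⟩
    obtain ⟨c, hac, hca⟩ := TransGen.head'_iff.1 h
    obtain ⟨n, g, hg0, hglast, hg⟩ := hca.exists_fin_path
    cases n with
    | zero =>
      obtain rfl : c = a := hg0.symm.trans hglast
      exact ⟨0, fun _ => c, fun _ => hac⟩
    | succ n =>
      refine ⟨n, g, fun i => ?_⟩
      cases i using Fin.lastCases with
      | last => rwa [Fin.last_add_one, hg0, hglast]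
      | cast j => rw [Fin.coeSucc_eq_succ]; exact hg j
  · rintro ⟨n, g, hg⟩
    have hreach : ∀ j, TransGen r (g 0) (g (j + 1)) := by
      intro j
      induction j using Fin.induction with
      | zero => exact .single (by simpa using hg 0)
      | succ j ih => rw [← Fin.coeSucc_eq_succ]; exact ih.tail (hg _)
    exact ⟨g 0, by simpa using hreach (Fin.last _)⟩

end Relation

section AlternatingStep

variable {α : Type*} [PartialOrder α] {S : Set (α × α)}

def AltStep (S : Set (α × α)) (x y : α) : Prop := ∃ p ∈ S, x ≤ p.2 ∧ p.1 ≤ y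

theorem AltStep.mono_left {x x' y : α} (hx : x' ≤ x) : AltStep S x y → AltStep S x' y :=
  fun ⟨p, hp, hxp, hpy⟩ => ⟨p, hp, hx.trans hxp, hpy⟩

theorem AltStep.mono_right {x y y' : α} (hy : y ≤ y') : AltStep S x y → AltStep S x y' :=
  fun ⟨p, hp, hxp, hpy⟩ => ⟨p, hp, hxp, hpy.trans hy⟩

theorem transGen_altStep_mono_left {x x' y : α} (hx : x' ≤ x)
    (h : TransGen (AltStep S) x y) : TransGen (AltStep S) x' y := by
  obtain ⟨z, hxz, hzy⟩ := TransGen.head'_iff.1 h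
  exact TransGen.head'_iff.2 ⟨z, hxz.mono_left hx, hzy⟩

theorem transGen_altStep_mono_right {x y y' : α} (hy : y ≤ y')
    (h : TransGen (AltStep S) x y) : TransGen (AltStep S) x y' := by
  obtain ⟨z, hxz, hzy⟩ := TransGen.tail'_iff.1 h
  exact TransGen.tail'_iff.2 ⟨z, hxz, hzy.mono_right hy⟩

theorem exists_transGen_altStep_self_iff :
    (∃ x, TransGen (AltStep S) x x) ↔ ∃ (k : ℕ) (f : Fin (k + 2) → α × α),
      (∀ i, f i ∈ S) ∧ ∀ i, (f i).1 ≤ (f (i + 1)).2 := by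
  rw [exists_transGen_self_iff_exists_fin_cycle]
  constructor
  · rintro ⟨k, g, hg⟩
    choose p hpS hgp hpg using hg
    exact ⟨k, p, hpS, fun i => (hpg i).trans (hgp (i + 1))⟩
  · rintro ⟨k, f, hfS, hf⟩
    exact ⟨k, fun i => (f i).1, fun i => ⟨f (i + 1), hfS _, hf i, le_rfl⟩⟩

theorem not_transGen_altStep_self_of_reverses (hS : ∀ p ∈ S, Incomp p.1 p.2)
    {r : α → α → Prop} (hr : IsLinearExtension r) (hrev : ∀ p ∈ S, r p.2 p.1) (x : α) :
    ¬ TransGen (AltStep S) x x := by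
  obtain ⟨hlin, hext⟩ := hr
  have hstep : AltStep S ≤ r := fun u v ⟨p, hp, hup, hpv⟩ =>
    _root_.trans (_root_.trans (hext _ _ hup) (hrev p hp)) (hext _ _ hpv)
  intro hx
  obtain ⟨y, ⟨p, hp, hxp, hpy⟩, hyx⟩ := TransGen.head'_iff.1 hx
  have hyx' : r y x := by simpa [reflTransGen_eq_self] using ReflTransGen.mono hstep _ _ hyx
  have hp12 : r p.1 p.2 := _root_.trans (_root_.trans (hext _ _ hpy) hyx') (hext _ _ hxp)
  exact (hS p hp).1 (antisymm hp12 (hrev p hp)).le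

def AltLE (S : Set (α × α)) (x y : α) : Prop := x ≤ y ∨ TransGen (AltStep S) x y

theorem isPartialOrder_altLE (hS : ∀ x, ¬ TransGen (AltStep S) x x) :
    IsPartialOrder α (AltLE S) where
  refl x := .inl le_rfl
  trans x y z := by
    rintro (hxy | hxy) (hyz | hyz)
    · exact .inl (hxy.trans hyz)
    · exact .inr (transGen_altStep_mono_left hxy hyz)
    · exact .inr (transGen_altStep_mono_right hyz hxy)
    · exact .inr (hxy.trans hyz)
  antisymm x y := by
    rintro (hxy | hxy) (hyx | hyx)
    · exact le_antisymm hxy hyx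
    · exact absurd (transGen_altStep_mono_left hxy hyx) (hS x)
    · exact absurd (transGen_altStep_mono_right hyx hxy) (hS x)
    · exact absurd (hxy.trans hyx) (hS x)

theorem exists_linearExtension_reverses (hS : ∀ x, ¬ TransGen (AltStep S) x x) :
    ∃ r : α → α → Prop, IsLinearExtension r ∧ ∀ p ∈ S, r p.2 p.1 := by
  have := isPartialOrder_altLE hS
  obtain ⟨r, hr, hle⟩ := extend_partialOrder (AltLE S)
  exact ⟨r, ⟨hr, fun x y hxy => hle _ _ (.inl hxy)⟩,
    fun p hp => hle _ _ (.inr (.single ⟨p, hp, le_rfl, le_rfl⟩))⟩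

end AlternatingStep

theorem stmt_11_general (α : Type*) [PartialOrder α]
    (S : Set (α × α)) (hS : ∀ p ∈ S, Incomp p.1 p.2) :
    (∃ r : α → α → Prop, IsLinearExtension r ∧ ∀ p ∈ S, r p.2 p.1) ↔
      ¬ ∃ (k : ℕ) (f : Fin (k + 2) → α × α),
          (∀ i, f i ∈ S) ∧ ∀ i, (f i).1 ≤ (f (i + 1)).2 := by
  rw [← exists_transGen_altStep_self_iff, not_exists]
  constructor
  · rintro ⟨r, hr, hrev⟩
    exact not_transGen_altStep_self_of_reverses hS hr hrev
  · exact exists_linearExtension_reverses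

/-- A set `S` of incomparable pairs of a finite poset is reversible (there is a single
linear extension reversing every pair of `S`) if and only if `S` contains no
alternating cycle `(a₁,b₁),…,(a_k,b_k)` (with `k ≥ 2` and `aᵢ ≤ b_{i+1}` cyclically). -/
theorem stmt_11 (α : Type*) [PartialOrder α] [Fintype α]
    (S : Set (α × α)) (hS : ∀ p ∈ S, Incomp p.1 p.2) :
    (∃ r : α → α → Prop, IsLinearExtension r ∧ ∀ p ∈ S, r p.2 p.1) ↔
      ¬ ∃ (k : ℕ) (f : Fin (k + 2) → α × α),
          (∀ i, f i ∈ S) ∧ ∀ i, (f i).1 ≤ (f (i + 1)).2 :=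
  stmt_11_general α S hS
end

section
/- If (a_1,b_1),…,(a_k,b_k) is a strict alternating cycle in a finite poset P, then {a_1,…,a_k} and {b_1,…,b_k} are each k-element antichains in P. -/
def IsStrictAlternating {α ι : Type*} [PartialOrder α] [Add ι] [One ι] (a b : ι → α) : Prop :=
  ∀ i j, a i ≤ b j ↔ j = i + 1

section

variable {α ι : Type*} [PartialOrder α]

theorem injective_of_le_imp_eq {f : ι → α} (hf : ∀ i j, f i ≤ f j → i = j) :
    Function.Injective f :=
  fun i j h => hf i j h.le

theorem incomp_of_le_imp_eq {f : ι → α} (hf : ∀ i j, f i ≤ f j → i = j) {i j : ι}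
    (hij : i ≠ j) : Incomp (f i) (f j) :=
  ⟨fun h => hij (hf i j h), fun h => hij (hf j i h).symm⟩

namespace IsStrictAlternating

variable [AddGroup ι] [One ι] {a b : ι → α}

theorem le_succ (h : IsStrictAlternating a b) (i : ι) : a i ≤ b (i + 1) :=
  (h i (i + 1)).2 rfl

theorem eq_of_left_le_left (h : IsStrictAlternating a b) {i j : ι} (hij : a i ≤ a j) :
    i = j :=
  add_right_cancel ((h i (j + 1)).1 (hij.trans (h.le_succ j))).symm

theorem eq_of_right_le_right (h : IsStrictAlternating a b) {i j : ι} (hij : b i ≤ b j) :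
    i = j := by
  have hpred : a (i - 1) ≤ b i := by simpa using h.le_succ (i - 1)
  simpa using ((h (i - 1) j).1 (hpred.trans hij)).symm

end IsStrictAlternating

end

theorem stmt_12_general (α : Type*) [PartialOrder α]
    (k : ℕ) (a b : Fin (k + 2) → α)
    (hstrict : ∀ i j, a i ≤ b j ↔ j = i + 1) :
    Function.Injective a ∧ Function.Injective b ∧
      (∀ i j, i ≠ j → Incomp (a i) (a j)) ∧
      (∀ i j, i ≠ j → Incomp (b i) (b j)) := by
  have hcycle : IsStrictAlternating a b := hstrict
  have ha : ∀ i j, a i ≤ a j → i = j := fun _ _ => hcycle.eq_of_left_le_left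
  have hb : ∀ i j, b i ≤ b j → i = j := fun _ _ => hcycle.eq_of_right_le_right
  exact ⟨injective_of_le_imp_eq ha, injective_of_le_imp_eq hb,
    fun _ _ => incomp_of_le_imp_eq ha, fun _ _ => incomp_of_le_imp_eq hb⟩

/-- If `(a₁,b₁),…,(a_k,b_k)` (with `k ≥ 2`) is a strict alternating cycle in a finite
poset `P`, then `{a₁,…,a_k}` and `{b₁,…,b_k}` are each `k`-element antichains in `P`. -/
theorem stmt_12 (α : Type*) [PartialOrder α] [Fintype α]
    (k : ℕ) (a b : Fin (k + 2) → α)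
    (hinc : ∀ i, Incomp (a i) (b i))
    (hstrict : ∀ i j, a i ≤ b j ↔ j = i + 1) :
    Function.Injective a ∧ Function.Injective b ∧
      (∀ i j, i ≠ j → Incomp (a i) (a j)) ∧
      (∀ i j, i ≠ j → Incomp (b i) (b j)) :=
  stmt_12_general α k a b hstrict
end

section
/- Let P = A ∪ B be a finite bipartite poset (A ⊆ Min(P), B ⊆ Max(P)) and let Q be a non-empty balanced subposet of P of size 2m admitting a matching, i.e., Q = {u_1,…,u_m} ∪ {v_1,…,v_m} with u_i ∈ A, v_i ∈ B and u_i incomparable with v_i for all i. Then Idim(P) ≤ m + Idim(P − Q). Moreover, if Q is a maximal such matched subposet, then Idim(P) ≤ m. -/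
/-- The "interval dimension" of a bipartite poset `P = A ∪ B`: the least `d` such that
some `d` linear extensions reverse every incomparable pair `(a,b) ∈ A × B`. -/
noncomputable def Idim (α : Type*) [PartialOrder α] (A B : Set α) : ℕ :=
  sInf {d | ∃ L : Fin d → (α → α → Prop), (∀ i, IsLinearExtension (L i)) ∧
    ∀ a ∈ A, ∀ b ∈ B, Incomp a b → ∃ i, L i b a}

section Aux

variable {α : Type*} [PartialOrder α]

/-- A partial order given as a relation extending `≤` extends to a linear extension. -/
lemma aux_extend (q : α → α → Prop) (hq : IsPartialOrder α q)
    (hle : ∀ x y : α, x ≤ y → q x y) :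
    ∃ r : α → α → Prop, IsLinearExtension r ∧ ∀ x y, q x y → r x y := by
  obtain ⟨s, hs, hqs⟩ := @extend_partialOrder α q hq
  exact ⟨s, ⟨hs, fun x y h => hqs _ _ (hle _ _ h)⟩, fun x y h => hqs _ _ h⟩

/-- There is a linear extension reversing a given incomparable pair. -/
lemma aux_reverse_pair {a b : α} (h : Incomp a b) :
    ∃ r : α → α → Prop, IsLinearExtension r ∧ r b a := by
  set q : α → α → Prop := fun x y => x ≤ y ∨ (x ≤ b ∧ a ≤ y) with hqdef
  have hq : IsPartialOrder α q := by
    refine { refl := fun x => Or.inl le_rfl, antisymm := ?_, trans := ?_ }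
    · rintro x y z (hxy | ⟨hxb, hay⟩) (hyz | ⟨hyb, haz⟩)
      · exact Or.inl (hxy.trans hyz)
      · exact Or.inr ⟨hxy.trans hyb, haz⟩
      · exact Or.inr ⟨hxb, hay.trans hyz⟩
      · exact absurd (hay.trans hyb) h.1
    · rintro x y (hxy | ⟨hxb, hay⟩) (hyx | ⟨hyb, hax⟩)
      · exact le_antisymm hxy hyx
      · exact absurd (hax.trans (hxy.trans hyb)) h.1
      · exact absurd (hay.trans (hyx.trans hxb)) h.1
      · exact absurd (hay.trans hyb) h.1
  obtain ⟨r, hr, hqr⟩ := aux_extend q hq (fun x y hxy => Or.inl hxy)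
  exact ⟨r, hr, hqr _ _ (Or.inr ⟨le_rfl, le_rfl⟩)⟩

/-- Given incomparable `u₀ v₀`, there is a linear extension putting `v₀` below everything
not above it, and `u₀` above everything not below it. -/
lemma aux_block {u₀ v₀ : α} (h : Incomp u₀ v₀) :
    ∃ r : α → α → Prop, IsLinearExtension r ∧ (∀ a, ¬ a ≤ v₀ → r v₀ a) ∧
      (∀ b, ¬ u₀ ≤ b → r b u₀) := by
  classical
  set f : α → ℕ := fun x => if u₀ ≤ x then 2 else if x ≤ v₀ then 0 else 1 with hf
  have hmono : ∀ x y : α, x ≤ y → f x ≤ f y := by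
    intro x y hxy
    simp only [hf]
    by_cases h1 : u₀ ≤ x
    · rw [if_pos h1, if_pos (h1.trans hxy)]
    · rw [if_neg h1]
      by_cases h2 : x ≤ v₀
      · rw [if_pos h2]; omega
      · rw [if_neg h2]
        by_cases h3 : u₀ ≤ y
        · rw [if_pos h3]; omega
        · rw [if_neg h3, if_neg (fun h4 => h2 (hxy.trans h4))]
  set q : α → α → Prop := fun x y => f x < f y ∨ (f x = f y ∧ x ≤ y) with hqdef
  have hq : IsPartialOrder α q := by
    refine { refl := fun x => Or.inr ⟨rfl, le_rfl⟩, antisymm := ?_, trans := ?_ }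
    · rintro x y z (h1 | ⟨h1, h1'⟩) (h2 | ⟨h2, h2'⟩)
      · exact Or.inl (h1.trans h2)
      · exact Or.inl (h2 ▸ h1)
      · exact Or.inl (h1 ▸ h2)
      · exact Or.inr ⟨h1.trans h2, h1'.trans h2'⟩
    · rintro x y (h1 | ⟨h1, h1'⟩) (h2 | ⟨h2, h2'⟩) <;> try omega
      exact le_antisymm h1' h2'
  obtain ⟨r, hr, hqr⟩ := aux_extend q hq (fun x y hxy =>
    (lt_or_eq_of_le (hmono x y hxy)).imp id (fun he => ⟨he, hxy⟩))
  have hfv : f v₀ = 0 := by simp only [hf]; rw [if_neg h.1, if_pos le_rfl]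
  have hfu : f u₀ = 2 := by simp only [hf]; rw [if_pos le_rfl]
  refine ⟨r, hr, ?_, ?_⟩
  · intro a ha
    refine hqr _ _ (Or.inl ?_)
    have : f a ≠ 0 := by
      simp only [hf]
      by_cases h1 : u₀ ≤ a
      · rw [if_pos h1]; omega
      · rw [if_neg h1, if_neg ha]; omega
    omega
  · intro b hb
    refine hqr _ _ (Or.inl ?_)
    have : f b ≤ 1 := by
      simp only [hf]
      rw [if_neg hb]
      by_cases h2 : b ≤ v₀ <;> simp [h2]
    omega

/-- A linear extension of a sub-poset lifts to a linear extension of the whole poset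
preserving the order on the subset. -/
lemma aux_lift (S : Set α) (r' : S → S → Prop) (hr' : IsLinearExtension r') :
    ∃ r : α → α → Prop, IsLinearExtension r ∧ ∀ x y : S, r' x y → r (x : α) (y : α) := by
  haveI hlin : IsLinearOrder S r' := hr'.1
  have hrefl : ∀ x : S, r' x x := fun x => refl_of r' x
  have htrans : ∀ x y z : S, r' x y → r' y z → r' x z := fun x y z h1 h2 => trans_of r' h1 h2
  have hanti : ∀ x y : S, r' x y → r' y x → x = y := fun x y h1 h2 => antisymm_of r' h1 h2
  have hext : ∀ x y : S, (x : α) ≤ (y : α) → r' x y := fun x y h =>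
    hr'.2 x y (Subtype.coe_le_coe.mp h)
  set q : α → α → Prop := fun x y => x ≤ y ∨ ∃ s t : S, x ≤ (s : α) ∧ r' s t ∧ (t : α) ≤ y
    with hqdef
  have hq : IsPartialOrder α q := by
    refine { refl := fun x => Or.inl le_rfl, antisymm := ?_, trans := ?_ }
    · rintro x y z (h1 | ⟨s, t, hxs, hst, hty⟩) (h2 | ⟨s', t', hys', hs't', ht'z⟩)
      · exact Or.inl (h1.trans h2)
      · exact Or.inr ⟨s', t', h1.trans hys', hs't', ht'z⟩
      · exact Or.inr ⟨s, t, hxs, hst, hty.trans h2⟩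
      · have h3 : r' t s' := hext _ _ (hty.trans hys')
        exact Or.inr ⟨s, t', hxs, htrans _ _ _ (htrans _ _ _ hst h3) hs't', ht'z⟩
    · rintro x y (h1 | ⟨s, t, hxs, hst, hty⟩) (h2 | ⟨s', t', hys', hs't', ht'x⟩)
      · exact le_antisymm h1 h2
      · -- x ≤ y, y ≤ s', r' s' t', t' ≤ x
        have h3 : r' t' s' := hext _ _ ((ht'x.trans h1).trans hys')
        have h4 : s' = t' := hanti _ _ hs't' h3
        have h5 : x ≤ (s' : α) := h1.trans hys'
        exact le_antisymm h1 (hys'.trans (h4 ▸ ht'x))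
      · have h3 : r' t s := hext _ _ ((hty.trans h2).trans hxs)
        have h4 : s = t := hanti _ _ hst h3
        exact le_antisymm (hxs.trans (h4 ▸ hty)) h2
      · have h1 : r' t s' := hext _ _ (hty.trans hys')
        have h2 : r' t' s := hext _ _ (ht'x.trans hxs)
        have h3 : s = s' := hanti _ _ (htrans _ _ _ hst h1) (htrans _ _ _ hs't' h2)
        have h4 : s = t := hanti _ _ hst (h3 ▸ h1)
        have h5 : s' = t' := hanti _ _ hs't' (h3 ▸ h2)
        have : x ≤ y := hxs.trans (h4 ▸ hty)
        have : y ≤ x := hys'.trans (h5 ▸ ht'x)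
        exact le_antisymm ‹x ≤ y› ‹y ≤ x›
  obtain ⟨r, hr, hqr⟩ := aux_extend q hq (fun x y hxy => Or.inl hxy)
  exact ⟨r, hr, fun x y h => hqr _ _ (Or.inr ⟨x, y, le_rfl, h, le_rfl⟩)⟩

/-- On a finite poset, the defining set of `Idim` is nonempty, so the infimum is attained. -/
lemma aux_Idim_mem (α : Type*) [PartialOrder α] [Finite α] (A B : Set α) :
    ∃ L : Fin (Idim α A B) → (α → α → Prop), (∀ i, IsLinearExtension (L i)) ∧
      ∀ a ∈ A, ∀ b ∈ B, Incomp a b → ∃ i, L i b a := by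
  classical
  have hne : {d | ∃ L : Fin d → (α → α → Prop), (∀ i, IsLinearExtension (L i)) ∧
      ∀ a ∈ A, ∀ b ∈ B, Incomp a b → ∃ i, L i b a}.Nonempty := by
    haveI : Fintype α := Fintype.ofFinite α
    set T : Set (α × α) := {p | p.1 ∈ A ∧ p.2 ∈ B ∧ Incomp p.1 p.2} with hT
    haveI : Fintype T := Fintype.ofFinite T
    obtain ⟨r₀, hr₀⟩ : ∃ r : α → α → Prop, IsLinearExtension r := by
      obtain ⟨r, hr, h⟩ := aux_extend (α := α) (· ≤ ·) inferInstance (fun _ _ h => h)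
      exact ⟨r, hr⟩
    set n := Fintype.card T with hn
    let e := Fintype.equivFin T
    have hR : ∀ p : T, ∃ r : α → α → Prop, IsLinearExtension r ∧ r (p : α × α).2 (p : α × α).1 :=
      fun p => aux_reverse_pair p.2.2.2
    choose R hR1 hR2 using hR
    refine ⟨n, fun i => R (e.symm i), fun i => hR1 _, ?_⟩
    intro a ha b hb hab
    refine ⟨e ⟨(a, b), ⟨ha, hb, hab⟩⟩, ?_⟩
    show R (e.symm (e ⟨(a, b), ⟨ha, hb, hab⟩⟩)) b a
    rw [Equiv.symm_apply_apply]
    exact hR2 ⟨(a, b), ⟨ha, hb, hab⟩⟩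
  exact Nat.sInf_mem hne

end Aux

/-- Let `P = A ∪ B` be a finite bipartite poset and `Q` a nonempty balanced subposet
of size `2m` admitting a matching `{u₁,…,u_m} ∪ {v₁,…,v_m}` with `uᵢ ∈ A`, `vᵢ ∈ B`,
`uᵢ ∥ vᵢ`.  Then `Idim P ≤ m + Idim (P − Q)`; moreover if the matched subposet `Q` is
maximal, then `Idim P ≤ m`. -/
theorem stmt_13 (α : Type*) [PartialOrder α] [Fintype α] (A B : Set α)
    (hA : ∀ a ∈ A, IsMin a) (hB : ∀ b ∈ B, IsMax b)
    (hcover : A ∪ B = Set.univ) (hdisj : Disjoint A B)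
    (m : ℕ) (hm : 0 < m) (u v : Fin m → α)
    (hu : Function.Injective u) (hv : Function.Injective v)
    (huA : ∀ i, u i ∈ A) (hvB : ∀ i, v i ∈ B)
    (huv : ∀ i, Incomp (u i) (v i)) :
    Idim α A B ≤
        m + Idim ↥((Set.range u ∪ Set.range v)ᶜ)
          (Subtype.val ⁻¹' A) (Subtype.val ⁻¹' B) ∧
      ((∀ a ∈ A, a ∉ Set.range u → ∀ b ∈ B, b ∉ Set.range v → ¬ Incomp a b) →
        Idim α A B ≤ m) := by
  classical
  have hK : ∀ i : Fin m, ∃ r : α → α → Prop, IsLinearExtension r ∧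
      (∀ a, ¬ a ≤ v i → r (v i) a) ∧ (∀ b, ¬ u i ≤ b → r b (u i)) :=
    fun i => aux_block (huv i)
  choose K hK1 hK2 hK3 using hK
  set S : Set α := (Set.range u ∪ Set.range v)ᶜ with hS
  have hKcov : ∀ a ∈ A, ∀ b ∈ B, Incomp a b →
      (a ∈ Set.range u ∨ b ∈ Set.range v) → ∃ i : Fin m, K i b a := by
    rintro a ha b hb hab (⟨i, rfl⟩ | ⟨i, rfl⟩)
    · exact ⟨i, hK3 i b hab.1⟩
    · exact ⟨i, hK2 i a hab.1⟩
  constructor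
  · obtain ⟨L', hL'1, hL'2⟩ := aux_Idim_mem ↥S (Subtype.val ⁻¹' A) (Subtype.val ⁻¹' B)
    have hM : ∀ j, ∃ r : α → α → Prop, IsLinearExtension r ∧
        ∀ x y : S, L' j x y → r (x : α) (y : α) := fun j => aux_lift S (L' j) (hL'1 j)
    choose M hM1 hM2 using hM
    apply Nat.sInf_le
    refine ⟨Fin.addCases K M, ?_, ?_⟩
    · intro i
      refine Fin.addCases (fun i => ?_) (fun j => ?_) i
      · simp only [Fin.addCases_left]; exact hK1 i
      · simp only [Fin.addCases_right]; exact hM1 j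
    · intro a ha b hb hab
      by_cases hcase : a ∈ Set.range u ∨ b ∈ Set.range v
      · obtain ⟨i, hi⟩ := hKcov a ha b hb hab hcase
        exact ⟨Fin.castAdd _ i, by simp only [Fin.addCases_left]; exact hi⟩
      · push_neg at hcase
        have haS : a ∈ S := by
          simp only [hS, Set.mem_compl_iff, Set.mem_union, not_or]
          refine ⟨hcase.1, ?_⟩
          rintro ⟨j, rfl⟩
          exact Set.disjoint_left.mp hdisj ha (hvB j)
        have hbS : b ∈ S := by
          simp only [hS, Set.mem_compl_iff, Set.mem_union, not_or]
          refine ⟨?_, hcase.2⟩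
          rintro ⟨j, rfl⟩
          exact Set.disjoint_left.mp hdisj (huA j) hb
        have hinc : Incomp (⟨a, haS⟩ : S) ⟨b, hbS⟩ :=
          ⟨fun h => hab.1 (Subtype.coe_le_coe.mpr h),
           fun h => hab.2 (Subtype.coe_le_coe.mpr h)⟩
        obtain ⟨j, hj⟩ := hL'2 ⟨a, haS⟩ ha ⟨b, hbS⟩ hb hinc
        exact ⟨Fin.natAdd m j, by simp only [Fin.addCases_right]; exact hM2 j _ _ hj⟩
  · intro hmax
    apply Nat.sInf_le
    refine ⟨K, hK1, ?_⟩
    intro a ha b hb hab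
    by_cases hcase : a ∈ Set.range u ∨ b ∈ Set.range v
    · exact hKcov a ha b hb hab hcase
    · push_neg at hcase
      exact absurd hab (hmax a ha hcase.1 b hb hcase.2)
end

section
/- Let P = A ∪ B be a finite bipartite poset and set m = min(|A|, |B|). If m ≥ 2, then either Idim(P) < m or P contains the standard example S_m as a subposet. -/
/-!
Let `|A| = m ≤ |B|`; the other case is dual. Call `b ∈ B` a partner of `a ∈ A` if `b` is
incomparable to `a` and above every other element of `A`. If every `a` has a partner, the
partners form an `S_m`. Otherwise some `a₀ ∈ A` has none: every `b` incomparable to `a₀` fails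
to lie above some `a ≠ a₀` in `A`, so `a ≰ b` as `A ∩ B = ∅`. For each `a ∈ A \ {a₀}` take a
linear extension placing everything outside `↑a` below `a`, and everything outside `↑a ∪ ↑a₀`
below `a₀`. It reverses `(a, b)` whenever `a ∥ b`, and `(a₀, b)` whenever `a₀ ∥ b` and `a ≰ b`,
so these `m - 1` extensions reverse every incomparable pair of `A × B`.
-/

open Function

section

variable {α : Type*} [PartialOrder α]

def HasStandardExample (A B : Set α) (m : ℕ) : Prop :=
  ∃ a b : Fin m → α, Injective a ∧ Injective b ∧
    (∀ i, a i ∈ A) ∧ (∀ i, b i ∈ B) ∧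
    (∀ i j : Fin m, a i < b j ↔ i ≠ j) ∧
    (∀ i : Fin m, Incomp (a i) (b i))

lemma IsLinearExtension.orderDual {r : α → α → Prop} (h : IsLinearExtension r) :
    IsLinearExtension (α := αᵒᵈ) (swap r) :=
  have := h.1
  ⟨inferInstanceAs (IsLinearOrder α (swap r)), fun x y hxy => h.2 y x hxy⟩

lemma exists_isLinearExtension_of_monotone {β : Type*} [LinearOrder β] {f : α → β}
    (hf : Monotone f) : ∃ L : α → α → Prop, IsLinearExtension L ∧ ∀ x y, f x < f y → L x y := by
  let r : α → α → Prop := fun x y => f x < f y ∨ (f x = f y ∧ x ≤ y)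
  have : IsPartialOrder α r :=
    { refl := fun x => Or.inr ⟨rfl, le_rfl⟩
      trans := by
        rintro x y z (hxy | ⟨hxy, hxy'⟩) (hyz | ⟨hyz, hyz'⟩)
        · exact Or.inl (hxy.trans hyz)
        · exact Or.inl (hyz ▸ hxy)
        · exact Or.inl (hxy ▸ hyz)
        · exact Or.inr ⟨hxy.trans hyz, hxy'.trans hyz'⟩
      antisymm := by
        rintro x y (hxy | ⟨-, hxy⟩) (hyx | ⟨-, hyx⟩)
        · exact absurd (hxy.trans hyx) (lt_irrefl _)
        · exact absurd hxy (hf hyx).not_gt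
        · exact absurd hyx (hf hxy).not_gt
        · exact le_antisymm hxy hyx }
  obtain ⟨L, hL, hrL⟩ := extend_partialOrder r
  refine ⟨L, ⟨hL, fun x y hxy => hrL x y ?_⟩, fun x y h => hrL x y (Or.inl h)⟩
  exact (hf hxy).lt_or_eq.imp_right fun h => ⟨h, hxy⟩

lemma exists_isLinearExtension_below_of_not_le (u v : α) :
    ∃ L : α → α → Prop, IsLinearExtension L ∧ ∀ y, ¬ u ≤ y → L y u ∧ (¬ v ≤ y → L y v) := by
  classical
  let f : α → ℕ := fun x => (if u ≤ x then 2 else 0) + (if v ≤ x then 1 else 0)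
  have hf : Monotone f := by
    intro x y hxy
    have hu : u ≤ x → u ≤ y := (le_trans · hxy)
    have hv : v ≤ x → v ≤ y := (le_trans · hxy)
    simp only [f]
    split_ifs <;> simp_all
  obtain ⟨L, hL, hfL⟩ := exists_isLinearExtension_of_monotone hf
  refine ⟨L, hL, fun y hu => ⟨hfL y u ?_, fun hv => hfL y v ?_⟩⟩
  · simp only [f, hu, le_refl, if_true, if_false]
    split_ifs <;> omega
  · by_cases huv : u ≤ v <;> simp [f, hu, hv, huv]

lemma Idim_le_nat_card {ι : Type*} [Finite ι] {A B : Set α} (L : ι → α → α → Prop)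
    (hL : ∀ i, IsLinearExtension (L i)) (hrev : ∀ a ∈ A, ∀ b ∈ B, Incomp a b → ∃ i, L i b a) :
    Idim α A B ≤ Nat.card ι := by
  let e := (Finite.equivFin ι).symm
  refine Nat.sInf_le ⟨fun i => L (e i), fun i => hL (e i), fun a ha b hb hab => ?_⟩
  obtain ⟨i, hi⟩ := hrev a ha b hb hab
  exact ⟨e.symm i, by simpa using hi⟩

lemma Idim_orderDual (A B : Set α) : Idim αᵒᵈ B A = Idim α A B := by
  unfold Idim
  congr 1
  -- `Incomp` in `αᵒᵈ` is definitionally `Incomp` in `α` with its arguments swapped.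
  ext d
  constructor <;> rintro ⟨L, hL, hrev⟩
  · exact ⟨fun i => swap (L i), fun i => (hL i).orderDual,
      fun a ha b hb hab => hrev b hb a ha hab⟩
  · exact ⟨fun i => swap (L i), fun i => (hL i).orderDual,
      fun b hb a ha hab => hrev a ha b hb hab⟩

lemma hasStandardExample_zero (A B : Set α) : HasStandardExample A B 0 :=
  ⟨finZeroElim, finZeroElim, fun i => i.elim0, fun i => i.elim0, fun i => i.elim0,
    fun i => i.elim0, fun i => i.elim0, fun i => i.elim0⟩

lemma HasStandardExample.of_orderDual {A B : Set α} {m : ℕ}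
    (h : HasStandardExample (α := αᵒᵈ) B A m) : HasStandardExample A B m := by
  obtain ⟨a, b, ha, hb, haB, hbA, hab, hinc⟩ := h
  exact ⟨b, a, hb, ha, hbA, haB, fun i j => (hab j i).trans ne_comm, hinc⟩

lemma hasStandardExample_of_forall_exists {A B : Set α} (hA : A.Finite)
    (h : ∀ a ∈ A, ∃ b ∈ B, Incomp a b ∧ ∀ a' ∈ A, a' ≠ a → a' < b) :
    HasStandardExample A B A.ncard := by
  have := hA.to_subtype
  let e : Fin A.ncard ≃ A := (Finite.equivFin A).symm
  let a : Fin A.ncard → α := fun i => e i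
  have ha : Injective a := Subtype.val_injective.comp e.injective
  choose b hbB hinc hlt using fun i => h (a i) (e i).2
  have hab : ∀ i j, a i < b j ↔ i ≠ j := fun i j =>
    ⟨fun hij hij' => (hinc j).1 (hij' ▸ hij).le, fun hij => hlt j (a i) (e i).2 (ha.ne hij)⟩
  refine ⟨a, b, ha, fun i j hbij => ?_, fun i => (e i).2, hbB, hab, hinc⟩
  by_contra hij
  exact (hinc i).1 (hbij ▸ (hab i j).2 hij).le

lemma Idim_lt_ncard_of_forall_exists_not_lt {A B : Set α} (hA : A.Finite) (hAB : Disjoint A B)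
    {a₀ : α} (ha₀ : a₀ ∈ A) (h : ∀ b ∈ B, Incomp a₀ b → ∃ a ∈ A, a ≠ a₀ ∧ ¬ a < b) :
    Idim α A B < A.ncard := by
  have := (hA.sdiff (t := {a₀})).to_subtype
  choose L hL hbelow using fun a : ↥(A \ {a₀}) => exists_isLinearExtension_below_of_not_le a.1 a₀
  refine (Idim_le_nat_card L hL fun a ha b hb hab => ?_).trans_lt
    (Set.ncard_sdiff_singleton_lt_of_mem ha₀ hA)
  by_cases haa₀ : a = a₀
  · subst haa₀
    obtain ⟨a', ha', ha'a₀, hnlt⟩ := h b hb hab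
    have hnle : ¬ a' ≤ b := fun hle => hnlt (hle.lt_of_ne (hAB.ne_of_mem ha' hb))
    exact ⟨⟨a', ha', ha'a₀⟩, (hbelow _ b hnle).2 hab.1⟩
  · exact ⟨⟨a, ha, haa₀⟩, (hbelow _ b hab.1).1⟩

theorem Idim_lt_ncard_or_hasStandardExample {A B : Set α} (hAB : Disjoint A B) :
    Idim α A B < A.ncard ∨ HasStandardExample A B A.ncard := by
  rcases A.finite_or_infinite with hA | hA
  · by_cases h : ∀ a ∈ A, ∃ b ∈ B, Incomp a b ∧ ∀ a' ∈ A, a' ≠ a → a' < b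
    · exact Or.inr (hasStandardExample_of_forall_exists hA h)
    · push Not at h
      obtain ⟨a₀, ha₀, h⟩ := h
      exact Or.inl (Idim_lt_ncard_of_forall_exists_not_lt hA hAB ha₀ h)
  · rw [hA.ncard]
    exact Or.inr (hasStandardExample_zero A B)

end

theorem stmt_14_general (α : Type*) [PartialOrder α] (A B : Set α)
    (hdisj : Disjoint A B)
    (m : ℕ) (hm : m = min A.ncard B.ncard) :
    Idim α A B < m ∨
      ∃ a b : Fin m → α, Function.Injective a ∧ Function.Injective b ∧
        (∀ i, a i ∈ A) ∧ (∀ i, b i ∈ B) ∧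
        (∀ i j : Fin m, a i < b j ↔ i ≠ j) ∧
        (∀ i : Fin m, Incomp (a i) (b i)) := by
  rcases le_total A.ncard B.ncard with hAB | hBA
  · rw [min_eq_left hAB] at hm
    subst hm
    exact Idim_lt_ncard_or_hasStandardExample hdisj
  · rw [min_eq_right hBA] at hm
    subst hm
    rcases Idim_lt_ncard_or_hasStandardExample (α := αᵒᵈ) hdisj.symm with h | h
    · exact Or.inl ((Idim_orderDual A B).symm.trans_lt h)
    · exact Or.inr h.of_orderDual

/-- Let `P = A ∪ B` be a finite bipartite poset and `m = min (|A|, |B|)`.  If `m ≥ 2`,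
then either `Idim P < m` or `P` contains the standard example `S_m` (with minimal
elements in `A` and maximal elements in `B`). -/
theorem stmt_14 (α : Type*) [PartialOrder α] [Fintype α] (A B : Set α)
    (hA : ∀ a ∈ A, IsMin a) (hB : ∀ b ∈ B, IsMax b)
    (hcover : A ∪ B = Set.univ) (hdisj : Disjoint A B)
    (m : ℕ) (hm : m = min A.ncard B.ncard) (hm2 : 2 ≤ m) :
    Idim α A B < m ∨
      ∃ a b : Fin m → α, Function.Injective a ∧ Function.Injective b ∧
        (∀ i, a i ∈ A) ∧ (∀ i, b i ∈ B) ∧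
        (∀ i j : Fin m, a i < b j ↔ i ≠ j) ∧
        (∀ i : Fin m, Incomp (a i) (b i)) :=
  stmt_14_general α A B hdisj m hm
end

section
/- Let A be a maximal antichain in a finite poset P which is not an antichain. If X = D(A) and Y = U(A) are both antichains with |X| = s and |Y| = s + t (s, t ≥ 0), then dim(P) ≤ 1 + t + ⌈4s/3⌉. -/
/-!
`P` is the union of the antichains `X = D(A)`, `A` and `Y = U(A)`, and every strict comparability
goes up from `X` to `A` to `Y`. A strictly monotone level function `α → ℕ` with ties broken by an
injective key is a linear extension. The base level `X < A < Y`, together with any second level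
function and opposite tie-breaks, reverses every pair inside a layer, so it remains to put `a`
below `x` for `x ∥ a`, `y` below `a` for `a ∥ y`, and `y` below `x` for `x ∥ y`.
An incomparable pair `x ∥ y` costs one extension, in which `x` is as high and `y` as low as
possible. Once every remaining `x` is below every remaining `y`, two extensions serve two `x`'s
and one `y`, and two more serve one `x` and two `y`'s: three `x`'s and three `y`'s cost four
extensions, which gives `⌈4s/3⌉`, and each of the `t` surplus elements of `Y` costs one.
-/

section Realizer

variable {α : Type*}

def lexRel {γ β : Type*} [LinearOrder γ] [LinearOrder β] (ℓ : α → γ) (k : α → β) (u v : α) :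
    Prop :=
  toLex (ℓ u, k u) ≤ toLex (ℓ v, k v)

section LexRel

variable {γ β : Type*} [LinearOrder γ] [LinearOrder β] {ℓ : α → γ} {k : α → β}

theorem isLinearExtension_lexRel [PartialOrder α] (hℓ : StrictMono ℓ)
    (hk : Function.Injective k) : IsLinearExtension (lexRel ℓ k) := by
  refine ⟨{ refl := fun _ => le_rfl
            trans := fun _ _ _ => le_trans
            antisymm := fun u v huv hvu =>
              hk (congrArg (fun p => (ofLex p).2) (le_antisymm huv hvu))
            total := fun _ _ => le_total _ _ }, fun u v huv => ?_⟩
  rcases huv.lt_or_eq with h | rfl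
  · exact (Prod.Lex.toLex_lt_toLex.2 (Or.inl (hℓ h))).le
  · exact le_rfl

theorem not_lexRel_of_lt {u v : α} (h : ℓ v < ℓ u) : ¬ lexRel ℓ k u v :=
  not_le.2 (Prod.Lex.toLex_lt_toLex.2 (Or.inl h))

theorem not_lexRel_of_eq_of_lt {u v : α} (h : ℓ u = ℓ v) (hk : k v < k u) :
    ¬ lexRel ℓ k u v :=
  not_le.2 (Prod.Lex.toLex_lt_toLex.2 (Or.inr ⟨h.symm, hk⟩))

end LexRel

def SomeBelow (L : List (α → ℕ)) (u v : α) : Prop := ∃ ℓ ∈ L, ℓ u < ℓ v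

theorem SomeBelow.mono {L L' : List (α → ℕ)} {u v : α} (h : SomeBelow L u v) (hL : L ⊆ L') :
    SomeBelow L' u v :=
  let ⟨ℓ, hℓ, hlt⟩ := h; ⟨ℓ, hL hℓ, hlt⟩

theorem someBelow_of_lt_or_lt {ℓ₁ ℓ₂ : α → ℕ} {L : List (α → ℕ)} {u v : α}
    (h : ℓ₁ u < ℓ₁ v ∨ ℓ₂ u < ℓ₂ v) : SomeBelow (ℓ₁ :: ℓ₂ :: L) u v := by
  rcases h with h | h
  exacts [⟨ℓ₁, List.mem_cons_self, h⟩, ⟨ℓ₂, List.mem_cons_of_mem _ List.mem_cons_self, h⟩]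

variable [PartialOrder α]

theorem realizerOfSize_length (R : List (α → α → Prop)) (hext : ∀ r ∈ R, IsLinearExtension r)
    (hrev : ∀ u v, ¬ u ≤ v → ∃ r ∈ R, ¬ r u v) : RealizerOfSize α R.length := by
  refine ⟨R.get, fun i => hext _ (R.get_mem i), fun u v => ⟨fun h i => ?_, fun h => ?_⟩⟩
  · exact (hext _ (R.get_mem i)).2 u v h
  · by_contra huv
    obtain ⟨r, hr, hn⟩ := hrev u v huv
    obtain ⟨i, rfl⟩ := List.mem_iff_get.1 hr
    exact hn (h i)

/-- Ties of `ℓ₀` are broken by `ℓ₁` reversed and then by an injective key in the first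
extension, and ties of `ℓ₁` by the reversed key in the second, so two distinct elements on the
same level of `ℓ₀` appear in both orders. -/
theorem realizerOfSize_of_levels [Countable α] (ℓ₀ ℓ₁ : α → ℕ) (L : List (α → ℕ))
    (hmono : ∀ ℓ ∈ ℓ₀ :: ℓ₁ :: L, StrictMono ℓ)
    (hrev : ∀ u v, ¬ u ≤ v → ℓ₀ u = ℓ₀ v ∨ SomeBelow (ℓ₀ :: ℓ₁ :: L) v u) :
    RealizerOfSize α (L.length + 2) := by
  obtain ⟨e, he⟩ := Countable.exists_injective_nat α
  set R₀ := lexRel ℓ₀ (fun u => toLex (OrderDual.toDual (ℓ₁ u), e u))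
  set R₁ := lexRel ℓ₁ (fun u => OrderDual.toDual (e u))
  have hreal := realizerOfSize_length (R₀ :: R₁ :: L.map fun ℓ => lexRel ℓ e) ?_ ?_
  · simpa using hreal
  · simp only [List.mem_cons, List.mem_map]
    rintro r (rfl | rfl | ⟨ℓ, hℓ, rfl⟩)
    · exact isLinearExtension_lexRel (hmono _ (by simp))
        fun u v h => he (congrArg (fun p => (ofLex p).2) h)
    · exact isLinearExtension_lexRel (hmono _ (by simp)) fun u v h => he h
    · exact isLinearExtension_lexRel (hmono ℓ (by simp [hℓ])) he
  intro u v huv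
  rcases hrev u v huv with h₀ | ⟨ℓ, hℓ, hlt⟩
  · have hne : e u ≠ e v := fun h => huv (he h).le
    rcases lt_trichotomy (ℓ₁ u) (ℓ₁ v) with h₁ | h₁ | h₁
    · exact ⟨R₀, by simp, not_lexRel_of_eq_of_lt h₀ (Prod.Lex.toLex_lt_toLex.2 (Or.inl h₁))⟩
    · rcases hne.lt_or_gt with hk | hk
      · exact ⟨R₁, by simp, not_lexRel_of_eq_of_lt h₁ hk⟩
      · exact ⟨R₀, by simp,
          not_lexRel_of_eq_of_lt h₀ (Prod.Lex.toLex_lt_toLex.2 (Or.inr ⟨by simp [h₁], hk⟩))⟩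
    · exact ⟨R₁, by simp, not_lexRel_of_lt h₁⟩
  · simp only [List.mem_cons] at hℓ
    rcases hℓ with rfl | rfl | hℓ
    · exact ⟨R₀, by simp, not_lexRel_of_lt hlt⟩
    · exact ⟨R₁, by simp, not_lexRel_of_lt hlt⟩
    · exact ⟨lexRel ℓ e, List.mem_cons_of_mem _ (List.mem_cons_of_mem _ (List.mem_map_of_mem hℓ)),
        not_lexRel_of_lt hlt⟩

theorem dimP_le_of_realizerOfSize {d : ℕ} (h : RealizerOfSize α d) (hd : 0 < d) : dimP α ≤ d :=
  Nat.sInf_le ⟨hd, h⟩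

end Realizer

section Layers

variable {α : Type*} [PartialOrder α]

def strictBelow (A : Set α) : Set α := {x | x ∉ A ∧ ∃ a ∈ A, x < a}

def strictAbove (A : Set α) : Set α := {y | y ∉ A ∧ ∃ a ∈ A, a < y}

structure IsMiddleLayer (A : Set α) : Prop where
  antichain : IsAntichain (· ≤ ·) A
  maximal : ∀ x, x ∉ A → ∃ a ∈ A, x < a ∨ a < x
  below : IsAntichain (· ≤ ·) (strictBelow A)
  above : IsAntichain (· ≤ ·) (strictAbove A)

variable {A : Set α}

theorem IsAntichain.notMem_strictBelow_of_mem_strictAbove (hA : IsAntichain (· ≤ ·) A) {y : α}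
    (hy : y ∈ strictAbove A) : y ∉ strictBelow A := by
  rintro ⟨-, b, hb, hyb⟩
  obtain ⟨-, a, ha, hay⟩ := hy
  exact hA.not_lt ha hb (hay.trans hyb)

namespace IsMiddleLayer

variable (hS : IsMiddleLayer A)
include hS

theorem mem_or_mem_or_mem (z : α) : z ∈ strictBelow A ∨ z ∈ A ∨ z ∈ strictAbove A := by
  by_cases hz : z ∈ A
  · exact Or.inr (Or.inl hz)
  · obtain ⟨a, ha, h | h⟩ := hS.maximal z hz
    exacts [Or.inl ⟨hz, a, ha, h⟩, Or.inr (Or.inr ⟨hz, a, ha, h⟩)]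

theorem lt_cases {u v : α} (huv : u < v) :
    (u ∈ strictBelow A ∧ v ∈ A) ∨ (u ∈ strictBelow A ∧ v ∈ strictAbove A) ∨
      (u ∈ A ∧ v ∈ strictAbove A) := by
  have hA := hS.antichain
  rcases hS.mem_or_mem_or_mem u with hu | hu | hu <;>
    rcases hS.mem_or_mem_or_mem v with hv | hv | hv
  · exact (hS.below.not_lt hu hv huv).elim
  · exact Or.inl ⟨hu, hv⟩
  · exact Or.inr (Or.inl ⟨hu, hv⟩)
  · obtain ⟨-, b, hb, hvb⟩ := hv
    exact (hA.not_lt hu hb (huv.trans hvb)).elim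
  · exact (hA.not_lt hu hv huv).elim
  · exact Or.inr (Or.inr ⟨hu, hv⟩)
  · obtain ⟨-, a, ha, hau⟩ := hu
    obtain ⟨-, b, hb, hvb⟩ := hv
    exact (hA.not_lt ha hb ((hau.trans huv).trans hvb)).elim
  · obtain ⟨-, a, ha, hau⟩ := hu
    exact (hA.not_lt ha hv (hau.trans huv)).elim
  · exact (hS.above.not_lt hu hv huv).elim

end IsMiddleLayer

open scoped Classical in
noncomputable def layerwise (A : Set α) (fX fA fY : α → ℕ) (z : α) : ℕ :=
  if z ∈ A then fA z else if z ∈ strictBelow A then fX z else fY z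

variable {fX fA fY : α → ℕ} {z : α}

theorem layerwise_of_mem (hz : z ∈ A) : layerwise A fX fA fY z = fA z := if_pos hz

theorem layerwise_of_mem_strictBelow (hz : z ∈ strictBelow A) :
    layerwise A fX fA fY z = fX z := by
  rw [layerwise, if_neg hz.1, if_pos hz]

theorem layerwise_of_mem_strictAbove (hA : IsAntichain (· ≤ ·) A) (hz : z ∈ strictAbove A) :
    layerwise A fX fA fY z = fY z := by
  rw [layerwise, if_neg hz.1, if_neg (hA.notMem_strictBelow_of_mem_strictAbove hz)]

theorem IsMiddleLayer.strictMono_layerwise (hS : IsMiddleLayer A)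
    (hXA : ∀ x ∈ strictBelow A, ∀ a ∈ A, x < a → fX x < fA a)
    (hXY : ∀ x ∈ strictBelow A, ∀ y ∈ strictAbove A, x < y → fX x < fY y)
    (hAY : ∀ a ∈ A, ∀ y ∈ strictAbove A, a < y → fA a < fY y) :
    StrictMono (layerwise A fX fA fY) := by
  intro u v huv
  rcases hS.lt_cases huv with ⟨hu, hv⟩ | ⟨hu, hv⟩ | ⟨hu, hv⟩
  · rw [layerwise_of_mem_strictBelow hu, layerwise_of_mem hv]
    exact hXA u hu v hv huv
  · rw [layerwise_of_mem_strictBelow hu, layerwise_of_mem_strictAbove hS.antichain hv]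
    exact hXY u hu v hv huv
  · rw [layerwise_of_mem hu, layerwise_of_mem_strictAbove hS.antichain hv]
    exact hAY u hu v hv huv

end Layers

section Levels

variable {α : Type*} [PartialOrder α] {A : Set α}

def IsRaisedBy (ℓ : α → ℕ) (x : α) : Prop := ∀ z, ¬ x ≤ z → ℓ z < ℓ x

def IsLoweredBy (ℓ : α → ℕ) (y : α) : Prop := ∀ z, ¬ z ≤ y → ℓ y < ℓ z

noncomputable def baseLevel (A : Set α) : α → ℕ :=
  layerwise A (fun _ => 0) (fun _ => 1) (fun _ => 2)

open scoped Classical in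
noncomputable def raiseLevel (A : Set α) (x : α) : α → ℕ :=
  layerwise A (fun z => if z = x then 3 else 0) (fun z => if x < z then 4 else 1)
    (fun z => if x < z then 5 else 2)

open scoped Classical in
noncomputable def lowerLevel (A : Set α) (y : α) : α → ℕ :=
  layerwise A (fun z => if z < y then 0 else 3) (fun z => if z < y then 1 else 4)
    (fun z => if z = y then 2 else 5)

open scoped Classical in
noncomputable def shareLevel (A : Set α) (x y : α) : α → ℕ :=
  layerwise A (fun z => if z = x then 6 else if z < y then 0 else 3)
    (fun z => if z < y then 1 else if x < z then 7 else 4)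
    (fun z => if z = y then 2 else if x < z then 8 else 5)

/- Together, `raiseTwoLevel₁` and `raiseTwoLevel₂` raise `x₁, x₂` and lower `y` as far as `A` is
concerned. `x₁` is raised completely by the first; `x₂` and `y` conflict exactly on the elements
of `A` incomparable to both, and these are split between the two according to whether they lie
above `x₁`. -/
open scoped Classical in
noncomputable def raiseTwoLevel₁ (A : Set α) (x₁ x₂ y : α) : α → ℕ :=
  layerwise A (fun z => if z = x₁ then 4 else if z = x₂ then 2 else 0)
    (fun z => if x₁ < z then (if z < y then 5 else 7) else if x₂ < z then 3 else 1)
    (fun z => if z = y then 6 else 8)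

open scoped Classical in
noncomputable def raiseTwoLevel₂ (A : Set α) (x₁ x₂ y : α) : α → ℕ :=
  layerwise A (fun z => if z = x₂ then 2 else 0)
    (fun z => if x₂ < z then (if z < y then 3 else 5)
      else if z < y then 1 else if x₁ < z then 1 else 5)
    (fun z => if z = y then 4 else 6)

/- The order duals of `raiseTwoLevel₁` and `raiseTwoLevel₂`, with `y₁, y₂, x` in the roles of
`x₁, x₂, y`. -/
open scoped Classical in
noncomputable def lowerTwoLevel₁ (A : Set α) (x y₁ y₂ : α) : α → ℕ :=
  layerwise A (fun z => if z = x then 2 else 0)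
    (fun z => if z < y₁ then (if x < z then 3 else 1) else if z < y₂ then 5 else 7)
    (fun z => if z = y₁ then 4 else if z = y₂ then 6 else 8)

open scoped Classical in
noncomputable def lowerTwoLevel₂ (A : Set α) (x y₁ y₂ : α) : α → ℕ :=
  layerwise A (fun z => if z = x then 2 else 0)
    (fun z => if z < y₁ then (if z < y₂ then 3 else 5) else if x < z then (if z < y₂ then 3 else 5)
      else 1)
    (fun z => if z = y₂ then 4 else 6)

theorem isRaisedBy_raiseLevel {x : α} (hx : x ∈ strictBelow A) :
    IsRaisedBy (raiseLevel A x) x := by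
  intro z hz
  rw [raiseLevel, layerwise_of_mem_strictBelow hx, layerwise]
  split_ifs <;> first | omega | order

theorem isLoweredBy_lowerLevel (hA : IsAntichain (· ≤ ·) A) {y : α} (hy : y ∈ strictAbove A) :
    IsLoweredBy (lowerLevel A y) y := by
  intro z hz
  rw [lowerLevel, layerwise_of_mem_strictAbove hA hy, layerwise]
  split_ifs <;> first | omega | order

theorem isRaisedBy_shareLevel {x : α} (y : α) (hx : x ∈ strictBelow A) :
    IsRaisedBy (shareLevel A x y) x := by
  intro z hz
  rw [shareLevel, layerwise_of_mem_strictBelow hx, layerwise]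
  split_ifs <;> first | omega | order

theorem isLoweredBy_shareLevel (hA : IsAntichain (· ≤ ·) A) (x : α) {y : α}
    (hy : y ∈ strictAbove A) : IsLoweredBy (shareLevel A x y) y := by
  intro z hz
  rw [shareLevel, layerwise_of_mem_strictAbove hA hy, layerwise]
  split_ifs <;> first | omega | order

variable (hS : IsMiddleLayer A) {x y : α}
include hS

theorem IsMiddleLayer.strictMono_baseLevel : StrictMono (baseLevel A) := by
  apply hS.strictMono_layerwise <;> intros <;> omega

theorem IsMiddleLayer.strictMono_raiseLevel : StrictMono (raiseLevel A x) := by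
  apply hS.strictMono_layerwise <;> intro u _ v _ huv <;> split_ifs <;>
    first | omega | order

theorem IsMiddleLayer.strictMono_lowerLevel : StrictMono (lowerLevel A y) := by
  apply hS.strictMono_layerwise <;> intro u _ v _ huv <;> split_ifs <;>
    first | omega | order

theorem IsMiddleLayer.strictMono_shareLevel (hxy : ¬ x < y) : StrictMono (shareLevel A x y) := by
  apply hS.strictMono_layerwise <;> intro u _ v _ huv <;> split_ifs <;>
    first | omega | order

theorem IsMiddleLayer.strictMono_raiseTwoLevel₁ {x₁ x₂ : α} :
    StrictMono (raiseTwoLevel₁ A x₁ x₂ y) := by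
  apply hS.strictMono_layerwise <;> intro u _ v _ huv <;> split_ifs <;>
    first | omega | order

theorem IsMiddleLayer.strictMono_raiseTwoLevel₂ {x₁ x₂ : α} :
    StrictMono (raiseTwoLevel₂ A x₁ x₂ y) := by
  apply hS.strictMono_layerwise <;> intro u _ v _ huv <;> split_ifs <;>
    first | omega | order

theorem IsMiddleLayer.strictMono_lowerTwoLevel₁ {y₁ y₂ : α} :
    StrictMono (lowerTwoLevel₁ A x y₁ y₂) := by
  apply hS.strictMono_layerwise <;> intro u _ v _ huv <;> split_ifs <;>
    first | omega | order

theorem IsMiddleLayer.strictMono_lowerTwoLevel₂ {y₁ y₂ : α} :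
    StrictMono (lowerTwoLevel₂ A x y₁ y₂) := by
  apply hS.strictMono_layerwise <;> intro u _ v _ huv <;> split_ifs <;>
    first | omega | order

end Levels

section Covering

variable {α : Type*} [PartialOrder α] {A : Set α}

/-- `L` reverses the incomparable pairs through `X'` and `Y'` that lie in different layers and
are not already reversed by `baseLevel`. -/
structure Reverses (A : Set α) (L : List (α → ℕ)) (X' Y' : Set α) : Prop where
  raise : ∀ x ∈ X', ∀ a ∈ A, ¬ x ≤ a → SomeBelow L a x
  lower : ∀ y ∈ Y', ∀ a ∈ A, ¬ a ≤ y → SomeBelow L y a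
  cross : ∀ x ∈ X', ∀ y ∈ Y', ¬ x ≤ y → SomeBelow L y x

namespace Reverses

variable {L L' : List (α → ℕ)} {X' Y' : Set α} {x y : α}

theorem mono (H : Reverses A L X' Y') (hL : L ⊆ L') : Reverses A L' X' Y' :=
  ⟨fun x hx a ha h => (H.raise x hx a ha h).mono hL,
    fun y hy a ha h => (H.lower y hy a ha h).mono hL,
    fun x hx y hy h => (H.cross x hx y hy h).mono hL⟩

theorem insert_left (H : Reverses A L X' Y') (hA : ∀ a ∈ A, ¬ x ≤ a → SomeBelow L a x)
    (hY : ∀ y ∈ Y', ¬ x ≤ y → SomeBelow L y x) : Reverses A L (insert x X') Y' := by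
  refine ⟨?_, H.lower, ?_⟩
  · rintro x' (rfl | hx')
    exacts [hA, H.raise x' hx']
  · rintro x' (rfl | hx')
    exacts [hY, H.cross x' hx']

theorem insert_right (H : Reverses A L X' Y') (hA : ∀ a ∈ A, ¬ a ≤ y → SomeBelow L y a)
    (hX : ∀ x ∈ X', ¬ x ≤ y → SomeBelow L y x) : Reverses A L X' (insert y Y') := by
  refine ⟨H.raise, ?_, fun x' hx' => ?_⟩
  · rintro y' (rfl | hy')
    exacts [hA, H.lower y' hy']
  · rintro y' (rfl | hy')
    exacts [hX x' hx', H.cross x' hx' y' hy']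

theorem insert_raised {ℓ : α → ℕ} (H : Reverses A L X' Y') (hℓ : ℓ ∈ L) (hx : IsRaisedBy ℓ x) :
    Reverses A L (insert x X') Y' :=
  H.insert_left (fun a _ h => ⟨ℓ, hℓ, hx a h⟩) fun y _ h => ⟨ℓ, hℓ, hx y h⟩

theorem insert_lowered {ℓ : α → ℕ} (H : Reverses A L X' Y') (hℓ : ℓ ∈ L) (hy : IsLoweredBy ℓ y) :
    Reverses A L X' (insert y Y') :=
  H.insert_right (fun a _ h => ⟨ℓ, hℓ, hy a h⟩) fun x _ h => ⟨ℓ, hℓ, hy x h⟩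

end Reverses

def Coverable (A X' Y' : Set α) (k : ℕ) : Prop :=
  ∃ L : List (α → ℕ), L.length ≤ k ∧ (∀ ℓ ∈ L, StrictMono ℓ) ∧ Reverses A L X' Y'

theorem coverable_empty : Coverable A ∅ ∅ 0 :=
  ⟨[], le_rfl, by simp, ⟨by simp, by simp, by simp⟩⟩

namespace Coverable

variable {X' Y' : Set α} {k : ℕ} {x y : α}

theorem mono {k' : ℕ} (h : Coverable A X' Y' k) (hk : k ≤ k') : Coverable A X' Y' k' :=
  let ⟨L, hlen, hmono, H⟩ := h; ⟨L, hlen.trans hk, hmono, H⟩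

variable (hS : IsMiddleLayer A)
include hS

theorem insert_raise (h : Coverable A X' Y' k) (hx : x ∈ strictBelow A) :
    Coverable A (insert x X') Y' (k + 1) := by
  obtain ⟨L, hlen, hmono, H⟩ := h
  refine ⟨raiseLevel A x :: L, by simpa using hlen,
    List.forall_mem_cons.2 ⟨hS.strictMono_raiseLevel, hmono⟩, ?_⟩
  exact (H.mono (List.subset_cons_self _ _)).insert_raised List.mem_cons_self
    (isRaisedBy_raiseLevel hx)

theorem insert_lower (h : Coverable A X' Y' k) (hy : y ∈ strictAbove A) :
    Coverable A X' (insert y Y') (k + 1) := by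
  obtain ⟨L, hlen, hmono, H⟩ := h
  refine ⟨lowerLevel A y :: L, by simpa using hlen,
    List.forall_mem_cons.2 ⟨hS.strictMono_lowerLevel, hmono⟩, ?_⟩
  exact (H.mono (List.subset_cons_self _ _)).insert_lowered List.mem_cons_self
    (isLoweredBy_lowerLevel hS.antichain hy)

theorem insert_share (h : Coverable A X' Y' k) (hx : x ∈ strictBelow A)
    (hy : y ∈ strictAbove A) (hxy : ¬ x < y) :
    Coverable A (insert x X') (insert y Y') (k + 1) := by
  obtain ⟨L, hlen, hmono, H⟩ := h
  refine ⟨shareLevel A x y :: L, by simpa using hlen,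
    List.forall_mem_cons.2 ⟨hS.strictMono_shareLevel hxy, hmono⟩, ?_⟩
  exact ((H.mono (List.subset_cons_self _ _)).insert_raised List.mem_cons_self
    (isRaisedBy_shareLevel y hx)).insert_lowered List.mem_cons_self
    (isLoweredBy_shareLevel hS.antichain x hy)

theorem insert_raiseTwo {x₁ x₂ : α} (h : Coverable A X' Y' k) (hx₁ : x₁ ∈ strictBelow A)
    (hx₂ : x₂ ∈ strictBelow A) (hne : x₁ ≠ x₂) (hy : y ∈ strictAbove A)
    (hlt : ∀ x ∈ insert x₁ (insert x₂ X'), ∀ y' ∈ insert y Y', x < y') :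
    Coverable A (insert x₁ (insert x₂ X')) (insert y Y') (k + 2) := by
  obtain ⟨L, hlen, hmono, H⟩ := h
  set ℓ₁ := raiseTwoLevel₁ A x₁ x₂ y
  set ℓ₂ := raiseTwoLevel₂ A x₁ x₂ y
  have hA := hS.antichain
  have hsub : L ⊆ ℓ₁ :: ℓ₂ :: L := fun _ h => List.mem_cons_of_mem _ (List.mem_cons_of_mem _ h)
  have h₁ : ∀ a ∈ A, ¬ x₁ ≤ a → SomeBelow (ℓ₁ :: ℓ₂ :: L) a x₁ := by
    refine fun a ha hxa => ⟨ℓ₁, List.mem_cons_self, ?_⟩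
    simp only [ℓ₁, raiseTwoLevel₁, layerwise_of_mem ha, layerwise_of_mem_strictBelow hx₁]
    split_ifs <;> first | omega | order
  have h₂ : ∀ a ∈ A, ¬ x₂ ≤ a → SomeBelow (ℓ₁ :: ℓ₂ :: L) a x₂ := by
    intro a ha hxa
    apply someBelow_of_lt_or_lt
    simp only [ℓ₁, ℓ₂, raiseTwoLevel₁, raiseTwoLevel₂, layerwise_of_mem ha,
      layerwise_of_mem_strictBelow hx₂]
    split_ifs <;> first | omega | order
  have h₃ : ∀ a ∈ A, ¬ a ≤ y → SomeBelow (ℓ₁ :: ℓ₂ :: L) y a := by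
    intro a ha hay
    apply someBelow_of_lt_or_lt
    simp only [ℓ₁, ℓ₂, raiseTwoLevel₁, raiseTwoLevel₂, layerwise_of_mem ha,
      layerwise_of_mem_strictAbove hA hy]
    split_ifs <;> first | omega | order
  refine ⟨ℓ₁ :: ℓ₂ :: L, by simpa using hlen, ?_, ?_⟩
  · exact List.forall_mem_cons.2 ⟨hS.strictMono_raiseTwoLevel₁,
      List.forall_mem_cons.2 ⟨hS.strictMono_raiseTwoLevel₂, hmono⟩⟩
  refine (((H.mono hsub).insert_left h₂ ?_).insert_left h₁ ?_).insert_right h₃ ?_ <;>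
    intro z hz hn <;> exact (hn (hlt _ (by simp_all) _ (by simp_all)).le).elim

theorem insert_lowerTwo {y₁ y₂ : α} (h : Coverable A X' Y' k) (hx : x ∈ strictBelow A)
    (hy₁ : y₁ ∈ strictAbove A) (hy₂ : y₂ ∈ strictAbove A) (hne : y₁ ≠ y₂)
    (hlt : ∀ x' ∈ insert x X', ∀ y ∈ insert y₁ (insert y₂ Y'), x' < y) :
    Coverable A (insert x X') (insert y₁ (insert y₂ Y')) (k + 2) := by
  obtain ⟨L, hlen, hmono, H⟩ := h
  set ℓ₁ := lowerTwoLevel₁ A x y₁ y₂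
  set ℓ₂ := lowerTwoLevel₂ A x y₁ y₂
  have hA := hS.antichain
  have hsub : L ⊆ ℓ₁ :: ℓ₂ :: L := fun _ h => List.mem_cons_of_mem _ (List.mem_cons_of_mem _ h)
  have h₀ : ∀ a ∈ A, ¬ x ≤ a → SomeBelow (ℓ₁ :: ℓ₂ :: L) a x := by
    intro a ha hxa
    apply someBelow_of_lt_or_lt
    simp only [ℓ₁, ℓ₂, lowerTwoLevel₁, lowerTwoLevel₂, layerwise_of_mem ha,
      layerwise_of_mem_strictBelow hx]
    split_ifs <;> first | omega | order
  have h₁ : ∀ a ∈ A, ¬ a ≤ y₁ → SomeBelow (ℓ₁ :: ℓ₂ :: L) y₁ a := by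
    refine fun a ha hay => ⟨ℓ₁, List.mem_cons_self, ?_⟩
    simp only [ℓ₁, lowerTwoLevel₁, layerwise_of_mem ha, layerwise_of_mem_strictAbove hA hy₁]
    split_ifs <;> first | omega | order
  have h₂ : ∀ a ∈ A, ¬ a ≤ y₂ → SomeBelow (ℓ₁ :: ℓ₂ :: L) y₂ a := by
    intro a ha hay
    apply someBelow_of_lt_or_lt
    simp only [ℓ₁, ℓ₂, lowerTwoLevel₁, lowerTwoLevel₂, layerwise_of_mem ha,
      layerwise_of_mem_strictAbove hA hy₂]
    split_ifs <;> first | omega | order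
  refine ⟨ℓ₁ :: ℓ₂ :: L, by simpa using hlen, ?_, ?_⟩
  · exact List.forall_mem_cons.2 ⟨hS.strictMono_lowerTwoLevel₁,
      List.forall_mem_cons.2 ⟨hS.strictMono_lowerTwoLevel₂, hmono⟩⟩
  refine (((H.mono hsub).insert_right h₂ ?_).insert_right h₁ ?_).insert_left h₀ ?_ <;>
    intro z hz hn <;> exact (hn (hlt _ (by simp_all) _ (by simp_all)).le).elim

end Coverable

end Covering

section Counting

variable {α : Type*} [PartialOrder α] {A : Set α}

namespace IsMiddleLayer

variable (hS : IsMiddleLayer A)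
include hS

theorem coverable_empty_left (Y' : Finset α) (hY' : ↑Y' ⊆ strictAbove A) :
    Coverable A ∅ Y' Y'.card := by
  classical
  induction Y' using Finset.induction_on with
  | empty => simpa using coverable_empty
  | insert y Y' hy ih =>
    rw [Finset.coe_insert, Finset.card_insert_of_notMem hy]
    exact (ih ((Finset.coe_subset.2 (Finset.subset_insert y Y')).trans hY')).insert_lower hS
      (hY' (by simp))

theorem coverable_of_forall_lt (X' Y' : Finset α) (hX' : ↑X' ⊆ strictBelow A)
    (hY' : ↑Y' ⊆ strictAbove A) (hle : X'.card ≤ Y'.card) (hlt : ∀ x ∈ X', ∀ y ∈ Y', x < y) :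
    Coverable A X' Y' (Y'.card - X'.card + (4 * X'.card + 2) / 3) := by
  classical
  induction hσ : X'.card using Nat.strong_induction_on generalizing X' Y' with
  | _ σ ih =>
  obtain rfl | rfl | rfl | ⟨m, rfl⟩ : σ = 0 ∨ σ = 1 ∨ σ = 2 ∨ ∃ m, σ = m + 3 := by
    rcases σ with _ | _ | _ | m <;> simp
  · rw [Finset.card_eq_zero.1 hσ, Finset.coe_empty]
    exact (hS.coverable_empty_left Y' hY').mono (by omega)
  · obtain ⟨x, rfl⟩ := Finset.card_eq_one.1 hσ
    have := (hS.coverable_empty_left Y' hY').insert_raise hS (x := x) (hX' (by simp))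
    simpa using this.mono (by omega)
  · obtain ⟨x₁, x₂, hne, rfl⟩ := Finset.card_eq_two.1 hσ
    obtain ⟨y, hy⟩ : Y'.Nonempty := Finset.card_pos.1 (by omega)
    have := (hS.coverable_empty_left (Y'.erase y) fun z hz => hY' (Finset.mem_of_mem_erase hz)
      ).insert_raiseTwo hS (x₁ := x₁) (x₂ := x₂) (hX' (by simp)) (hX' (by simp)) hne (hY' hy)
      fun x hx y' hy' => hlt x (by simpa using hx) y' (by aesop)
    rw [← Finset.insert_erase hy]
    simpa using this.mono (by rw [Finset.card_erase_of_mem hy]; omega)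
  · obtain ⟨n, hn⟩ : ∃ n, Y'.card = n + 3 := ⟨Y'.card - 3, by omega⟩
    obtain ⟨x₁, X₁, hx₁, rfl, hX₁⟩ := Finset.card_eq_succ.1 hσ
    obtain ⟨x₂, X₂, -, rfl, hX₂⟩ := Finset.card_eq_succ.1 hX₁
    obtain ⟨x₃, R, -, rfl, hR⟩ := Finset.card_eq_succ.1 hX₂
    obtain ⟨y₁, Y₁, -, rfl, hY₁⟩ := Finset.card_eq_succ.1 hn
    obtain ⟨y₂, Y₂, hy₂, rfl, hY₂⟩ := Finset.card_eq_succ.1 hY₁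
    obtain ⟨y₃, RY, -, rfl, hRY⟩ := Finset.card_eq_succ.1 hY₂
    have hrest := ih m (by omega) R RY (fun x hx => hX' (by simp_all))
      (fun y hy => hY' (by simp_all)) (by omega)
      (fun x hx y hy => hlt x (by simp [hx]) y (by simp [hy])) hR
    have := (hrest.insert_lowerTwo hS (x := x₃) (y₁ := y₂) (y₂ := y₃) (hX' (by simp))
      (hY' (by simp)) (hY' (by simp)) (by rintro rfl; simp at hy₂)
      (fun x hx y hy => hlt x (by aesop) y (by aesop))).insert_raiseTwo hS (x₁ := x₁) (x₂ := x₂)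
      (y := y₁) (hX' (by simp)) (hX' (by simp)) (by rintro rfl; simp at hx₁) (hY' (by simp))
      (fun x hx y hy => hlt x (by aesop) y (by aesop))
    rw [hn]
    simpa only [Finset.coe_insert] using this.mono (by omega)

theorem coverable (X' Y' : Finset α) (hX' : ↑X' ⊆ strictBelow A) (hY' : ↑Y' ⊆ strictAbove A)
    (hle : X'.card ≤ Y'.card) :
    Coverable A X' Y' (Y'.card - X'.card + (4 * X'.card + 2) / 3) := by
  classical
  induction hσ : X'.card using Nat.strong_induction_on generalizing X' Y' with
  | _ σ ih =>
  by_cases hshare : ∃ x ∈ X', ∃ y ∈ Y', ¬ x < y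
  · obtain ⟨x, hx, y, hy, hxy⟩ := hshare
    have hXe := Finset.card_erase_of_mem hx
    have hYe := Finset.card_erase_of_mem hy
    have hσ₀ : 0 < σ := hσ ▸ Finset.card_pos.2 ⟨x, hx⟩
    have := (ih (σ - 1) (by omega) (X'.erase x) (Y'.erase y)
      (fun z hz => hX' (Finset.mem_of_mem_erase hz)) (fun z hz => hY' (Finset.mem_of_mem_erase hz))
      (by omega) (by omega)).insert_share hS (hX' hx) (hY' hy) hxy
    rw [← Finset.coe_insert, ← Finset.coe_insert, Finset.insert_erase hx,
      Finset.insert_erase hy] at this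
    exact this.mono (by omega)
  · push Not at hshare
    exact hσ ▸ hS.coverable_of_forall_lt X' Y' hX' hY' hle hshare

theorem baseLevel_eq_or_someBelow {L : List (α → ℕ)}
    (H : Reverses A L (strictBelow A) (strictAbove A)) {u v : α} (huv : ¬ u ≤ v) :
    baseLevel A u = baseLevel A v ∨ SomeBelow (baseLevel A :: L) v u := by
  have hA := hS.antichain
  have hL : L ⊆ baseLevel A :: L := List.subset_cons_self _ _
  have base_lt (h : baseLevel A v < baseLevel A u) : SomeBelow (baseLevel A :: L) v u :=
    ⟨_, List.mem_cons_self, h⟩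
  rcases hS.mem_or_mem_or_mem u with hu | hu | hu <;>
    rcases hS.mem_or_mem_or_mem v with hv | hv | hv <;>
    simp only [baseLevel, layerwise_of_mem_strictBelow, layerwise_of_mem,
      layerwise_of_mem_strictAbove hA, hu, hv, true_or] at base_lt ⊢
  · exact Or.inr ((H.raise u hu v hv huv).mono hL)
  · exact Or.inr ((H.cross u hu v hv huv).mono hL)
  · exact Or.inr (base_lt (by omega))
  · exact Or.inr ((H.lower v hv u hu huv).mono hL)
  · exact Or.inr (base_lt (by omega))
  · exact Or.inr (base_lt (by omega))

theorem dimP_le_of_reverses [Countable α] {L : List (α → ℕ)} (hmono : ∀ ℓ ∈ L, StrictMono ℓ)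
    (H : Reverses A L (strictBelow A) (strictAbove A)) : dimP α ≤ max L.length 1 + 1 := by
  have hrev := fun u v => hS.baseLevel_eq_or_someBelow H (u := u) (v := v)
  rcases L with _ | ⟨ℓ₁, L⟩
  · refine dimP_le_of_realizerOfSize
      (realizerOfSize_of_levels (baseLevel A) (baseLevel A) [] ?_ fun u v huv => ?_) two_pos
    · simpa using hS.strictMono_baseLevel
    · exact (hrev u v huv).imp_right fun h => h.mono (by simp)
  · refine (dimP_le_of_realizerOfSize (realizerOfSize_of_levels _ ℓ₁ L
      (List.forall_mem_cons.2 ⟨hS.strictMono_baseLevel, hmono⟩) hrev) (by simp)).trans_eq ?_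
    simp

end IsMiddleLayer

end Counting

/-- Let `A` be a maximal antichain in a finite poset `P` which is not an antichain.
If `X = D(A)` and `Y = U(A)` are both antichains, `|X| = s` and `|Y| = s + t`,
then `dim P ≤ 1 + t + ⌈4s/3⌉`. -/
theorem stmt_15 (α : Type*) [PartialOrder α] [Fintype α] (A : Set α)
    (hanti : IsAntichain (· ≤ ·) A)
    (hmax : ∀ x, x ∉ A → ∃ a ∈ A, x < a ∨ a < x)
    (hnot : ¬ IsAntichain (· ≤ ·) (Set.univ : Set α))
    (s t : ℕ)
    (hX : IsAntichain (· ≤ ·) {x | x ∉ A ∧ ∃ a ∈ A, x < a})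
    (hY : IsAntichain (· ≤ ·) {y | y ∉ A ∧ ∃ a ∈ A, a < y})
    (hs : {x | x ∉ A ∧ ∃ a ∈ A, x < a}.ncard = s)
    (ht : {y | y ∉ A ∧ ∃ a ∈ A, a < y}.ncard = s + t) :
    dimP α ≤ 1 + t + (4 * s + 2) / 3 := by
  have hS : IsMiddleLayer A := ⟨hanti, hmax, hX, hY⟩
  have hXf := Set.toFinite (strictBelow A)
  have hYf := Set.toFinite (strictAbove A)
  have hs' : hXf.toFinset.card = s := (Set.ncard_eq_toFinset_card _ hXf).symm.trans hs
  have ht' : hYf.toFinset.card = s + t := (Set.ncard_eq_toFinset_card _ hYf).symm.trans ht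
  obtain ⟨L, hlen, hmono, H⟩ :=
    hS.coverable hXf.toFinset hYf.toFinset (by simp) (by simp) (by omega)
  rw [hXf.coe_toFinset, hYf.coe_toFinset] at H
  rw [hs', ht'] at hlen
  have hst : s + t ≠ 0 := by
    intro h0
    have hXe : strictBelow A = ∅ := (Set.ncard_eq_zero hXf).1 (hs.trans (by omega))
    have hYe : strictAbove A = ∅ := (Set.ncard_eq_zero hYf).1 (ht.trans h0)
    refine hnot (Set.eq_univ_of_forall (fun z => ?_) ▸ hanti)
    simpa [hXe, hYe] using hS.mem_or_mem_or_mem z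
  calc dimP α ≤ max L.length 1 + 1 := hS.dimP_le_of_reverses hmono H
    _ ≤ 1 + t + (4 * s + 2) / 3 := by omega
end

section
/- Let s ≥ 1, t = 5s, and let P = A ∪ B be a balanced bipartite poset with |P| = 4t that is partitioned into two disjoint balanced subposets T and T', each a copy of the standard example S_t, with matchings T = {a_1,…,a_t} ∪ {b_1,…,b_t} and T' = {w_1,…,w_t} ∪ {z_1,…,z_t}. If for each i = 1,…,t the 4-element subposet {a_i, b_i, w_i, z_i} is not isomorphic to S_2, then Idim(P) ≤ 9s. -/
/-!
A priority function `p : α → ℕ` on the maximal elements yields a linear extension of a bipartite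
poset: list the maximal elements by increasing priority and insert every minimal element just below
its strict upper bound of least priority. It reverses `(x, y)` as soon as `p y < p u` for every
`u > x`. Two such orders per index `i` (one settling every pair through `aᵢ` or `bᵢ`, one every pair
through `wᵢ` or `zᵢ`) give `2t`. Since `{aᵢ, bᵢ, wᵢ, zᵢ}` is not `S₂`, a single order settles all
pairs through `i` except those along an arc `i → q`. Greedily, either there are `s` disjoint arcs,
and each arc `j → q` lets two orders do the work of three, or there are `s` indices spanning no
arc, each of which needs one order instead of two. Either way `2t - s = 9s` orders suffice.
-/

section

open Finset

variable {α : Type*} [PartialOrder α]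

theorem exists_isLinearExtension_of_strictMono {γ : Type*} [LinearOrder γ] {f : α → γ}
    (hf : StrictMono f) :
    ∃ L : α → α → Prop, IsLinearExtension L ∧ ∀ x y, f x < f y → L x y := by
  let g : α → γ ×ₗ LinearExtension α := fun x => toLex (f x, toLinearExtension x)
  have hg : StrictMono g := fun x y h => Prod.Lex.toLex_lt_toLex.2 (Or.inl (hf h))
  have hg_inj : Function.Injective g := fun x y h => congrArg (fun p => (ofLex p).2) h
  refine ⟨fun x y => g x ≤ g y, ⟨?_, fun x y h => hg.monotone h⟩,
    fun x y h => (Prod.Lex.toLex_lt_toLex.2 (Or.inl h)).le⟩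
  exact { refl := fun _ => le_rfl, trans := fun _ _ _ => le_trans,
          antisymm := fun _ _ h₁ h₂ => hg_inj (le_antisymm h₁ h₂),
          total := fun _ _ => le_total _ _ }

def Reverses_s16 (p : α → ℕ) (x y : α) : Prop := ∀ u, x < u → p y < p u

theorem exists_isLinearExtension_reverses {A B : Set α}
    (hAB : ∀ u v, u < v → u ∈ A ∧ v ∈ B) (hdisj : Disjoint A B) (p : α → ℕ) :
    ∃ L : α → α → Prop, IsLinearExtension L ∧ ∀ x ∈ A, ∀ y ∈ B, Reverses_s16 p x y → L y x := by
  classical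
  -- an element of `A` takes the least priority of its strict upper bounds; the tag `false`
  -- places it just below them
  let key : α → ℕ∞ ×ₗ Bool := fun x =>
    if x ∈ B then toLex ((p x : ℕ∞), true) else toLex (⨅ (u) (_ : x < u), (p u : ℕ∞), false)
  have hkey : StrictMono key := by
    intro u v huv
    obtain ⟨hu, hv⟩ := hAB u v huv
    simp only [key, if_pos hv, if_neg (Set.disjoint_left.1 hdisj hu), Prod.Lex.toLex_lt_toLex]
    rcases (iInf₂_le v huv : ⨅ (u') (_ : u < u'), (p u' : ℕ∞) ≤ p v).lt_or_eq with h | h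
    · exact Or.inl h
    · exact Or.inr ⟨h, Bool.false_lt_true⟩
  obtain ⟨L, hL, hlt⟩ := exists_isLinearExtension_of_strictMono hkey
  refine ⟨L, hL, fun x hx y hy hxy => hlt y x ?_⟩
  simp only [key, if_pos hy, if_neg (Set.disjoint_left.1 hdisj hx), Prod.Lex.toLex_lt_toLex]
  refine Or.inl ?_
  calc (p y : ℕ∞) < ((p y + 1 : ℕ) : ℕ∞) := by exact_mod_cast Nat.lt_succ_self _
    _ ≤ ⨅ (u) (_ : x < u), (p u : ℕ∞) := le_iInf₂ fun u hu => by exact_mod_cast hxy u hu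

theorem idim_le_card {A B : Set α} (hAB : ∀ u v, u < v → u ∈ A ∧ v ∈ B)
    (hdisj : Disjoint A B) (P : Finset (α → ℕ))
    (hP : ∀ x ∈ A, ∀ y ∈ B, Incomp x y → ∃ p ∈ P, Reverses_s16 p x y) :
    Idim α A B ≤ #P := by
  choose L hL hrev using exists_isLinearExtension_reverses hAB hdisj
  refine Nat.sInf_le ⟨fun i => L (P.equivFin.symm i), fun i => hL _, fun x hx y hy hxy => ?_⟩
  obtain ⟨p, hp, hpxy⟩ := hP x hx y hy hxy
  exact ⟨P.equivFin ⟨p, hp⟩, by simpa using hrev p x hx y hy hpxy⟩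

open Classical in
noncomputable def tierPriority (h y₀ x₀ : α) (u : α) : ℕ :=
  if u = h then 0 else if u = y₀ then 1 else if x₀ < u then 3 else 2

theorem reverses_tierPriority_base {h y₀ x₀ y : α} (hh : ¬ x₀ < h) (hy₀ : ¬ x₀ < y₀)
    (hy : ¬ x₀ < y) : Reverses_s16 (tierPriority h y₀ x₀) x₀ y := by
  intro u hu
  have huh : u ≠ h := by rintro rfl; exact hh hu
  have huy₀ : u ≠ y₀ := by rintro rfl; exact hy₀ hu
  simp only [tierPriority, if_neg huh, if_neg huy₀, if_pos hu, if_neg hy]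
  split_ifs <;> omega

theorem reverses_tierPriority_head {h y₀ x₀ x : α} (hx : ¬ x < h) :
    Reverses_s16 (tierPriority h y₀ x₀) x h := by
  intro u hu
  have huh : u ≠ h := by rintro rfl; exact hx hu
  simp only [tierPriority, if_neg huh]
  split_ifs <;> omega

theorem reverses_tierPriority_pivot {h y₀ x₀ x : α} (hxh : ¬ x < h) (hxy₀ : ¬ x < y₀) :
    Reverses_s16 (tierPriority h y₀ x₀) x y₀ := by
  intro u hu
  have huh : u ≠ h := by rintro rfl; exact hxh hu
  have huy₀ : u ≠ y₀ := by rintro rfl; exact hxy₀ hu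
  simp only [tierPriority, if_neg huh, if_neg huy₀]
  split_ifs <;> omega

theorem exists_matching_or_independent {ι : Type*} [DecidableEq ι] (r : ι → ι → Prop) (m : ℕ)
    (k : ℕ) (S : Finset ι) (hS : 2 * k + m ≤ #S) :
    (∃ D ⊆ S, ∃ π : ι → ι, #D = k ∧ (∀ j ∈ D, π j ∈ S \ D ∧ r j (π j)) ∧ Set.InjOn π D) ∨
      ∃ R ⊆ S, #R = m ∧ ∀ j ∈ R, ∀ q ∈ R, j ≠ q → ¬ r j q := by
  induction k generalizing S with
  | zero => exact Or.inl ⟨∅, empty_subset S, id, card_empty, by simp, by simp⟩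
  | succ k ih =>
    by_cases hind : ∀ j ∈ S, ∀ q ∈ S, j ≠ q → ¬ r j q
    · obtain ⟨R, hRS, hR⟩ := exists_subset_card_eq (show m ≤ #S by omega)
      exact Or.inr ⟨R, hRS, hR, fun j hj q hq => hind j (hRS hj) q (hRS hq)⟩
    push Not at hind
    obtain ⟨j, hj, q, hq, hjq, hr⟩ := hind
    have hS'S : (S.erase j).erase q ⊆ S := (erase_subset _ _).trans (erase_subset _ _)
    have hS' : 2 * k + m ≤ #((S.erase j).erase q) := by
      rw [card_erase_of_mem (mem_erase.2 ⟨hjq.symm, hq⟩), card_erase_of_mem hj]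
      omega
    rcases ih _ hS' with ⟨D, hDS, π, hD, hπ, hinj⟩ | ⟨R, hRS, hR, hind⟩
    · have hjD : j ∉ D := fun h => by simpa using hDS h
      have hqD : q ∉ D := fun h => by simpa using hDS h
      have hπ' : ∀ x ∈ D, Function.update π j q x = π x := fun x hx =>
        Function.update_of_ne (ne_of_mem_of_not_mem hx hjD) _ _
      refine Or.inl ⟨insert j D, insert_subset hj (hDS.trans hS'S), Function.update π j q,
        by rw [card_insert_of_notMem hjD, hD], fun x hx => ?_, ?_⟩
      · rcases mem_insert.1 hx with rfl | hx
        · rw [Function.update_self]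
          exact ⟨mem_sdiff.2 ⟨hq, by simp [hjq.symm, hqD]⟩, hr⟩
        · obtain ⟨hπS, hπD⟩ := mem_sdiff.1 (hπ x hx).1
          have hπj : π x ≠ j := fun h => by simp [h] at hπS
          rw [hπ' x hx]
          exact ⟨mem_sdiff.2 ⟨hS'S hπS, by simp [hπj, hπD]⟩, (hπ x hx).2⟩
      · rw [coe_insert, Set.injOn_insert (by simpa using hjD), Function.update_self]
        refine ⟨hinj.congr fun x hx => (hπ' x hx).symm, ?_⟩
        rintro ⟨x, hx, hxq⟩
        rw [hπ' x hx] at hxq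
        simpa [hxq] using (mem_sdiff.1 (hπ x hx).1).1
    · exact Or.inr ⟨R, hRS.trans hS'S, hR, hind⟩

section TwoStandardExamples

variable {t : ℕ} (a b w z : Fin t → α)

noncomputable def abPriority (i : Fin t) : α → ℕ := tierPriority (b i) (b i) (a i)

noncomputable def wzPriority (i : Fin t) : α → ℕ := tierPriority (z i) (z i) (w i)

open Classical in
noncomputable def selfPriority (i : Fin t) : α → ℕ :=
  if a i < z i then tierPriority (b i) (z i) (w i) else tierPriority (z i) (b i) (a i)

open Classical in
noncomputable def arcPriority (j q : Fin t) : α → ℕ :=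
  if a j < z j then tierPriority (z q) (b j) (a j) else tierPriority (b j) (z q) (w q)

open Classical in
/-- `j → q` is an arc when `selfPriority j` leaves the incomparable pair `(a j, z q)`, resp.
`(w q, b j)`, unreversed. -/
def Arc (j q : Fin t) : Prop :=
  if a j < z j then ¬ a j < z q else ¬ w q < b j

structure IsCover (P : Finset (α → ℕ)) : Prop where
  ab : ∀ i, ∃ p ∈ P, Reverses_s16 p (a i) (b i)
  wz : ∀ i, ∃ p ∈ P, Reverses_s16 p (w i) (z i)
  az : ∀ i q, ¬ a i < z q → ∃ p ∈ P, Reverses_s16 p (a i) (z q)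
  wb : ∀ i q, ¬ w i < b q → ∃ p ∈ P, Reverses_s16 p (w i) (b q)

open Classical in
noncomputable def matchingFamily (D : Finset (Fin t)) (π : Fin t → Fin t) : Finset (α → ℕ) :=
  D.image (selfPriority a b w z) ∪ D.image (fun j => arcPriority a b w z j (π j)) ∪
    (D ∪ D.image π)ᶜ.image (wzPriority w z) ∪ Dᶜ.image (abPriority a b)

open Classical in
noncomputable def independentFamily (R : Finset (Fin t)) : Finset (α → ℕ) :=
  R.image (selfPriority a b w z) ∪ Rᶜ.image (abPriority a b) ∪ Rᶜ.image (wzPriority w z)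

theorem card_matchingFamily_le {D : Finset (Fin t)} {π : Fin t → Fin t}
    (hπ : ∀ j ∈ D, π j ∉ D) (hinj : Set.InjOn π D) :
    #(matchingFamily a b w z D π) ≤ 2 * t - #D := by
  classical
  set E := D ∪ D.image π
  have hE : #E = #D + #D := by
    rw [card_union_of_disjoint, card_image_of_injOn hinj]
    refine disjoint_left.2 fun j hj hj' => ?_
    obtain ⟨i, hi, rfl⟩ := mem_image.1 hj'
    exact hπ i hi hj
  have hEt : #E ≤ t := (card_le_univ E).trans_eq (Fintype.card_fin t)
  calc #(matchingFamily a b w z D π) ≤ #D + #D + #Eᶜ + #Dᶜ :=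
        (card_union_le _ _).trans <| add_le_add ((card_union_le _ _).trans <|
          add_le_add ((card_union_le _ _).trans <| add_le_add card_image_le card_image_le)
            card_image_le) card_image_le
    _ = 2 * t - #D := by rw [card_compl, card_compl, Fintype.card_fin]; omega

theorem card_independentFamily_le (R : Finset (Fin t)) :
    #(independentFamily a b w z R) ≤ 2 * t - #R := by
  classical
  have hRt : #R ≤ t := (card_le_univ R).trans_eq (Fintype.card_fin t)
  calc #(independentFamily a b w z R) ≤ #R + #Rᶜ + #Rᶜ :=
        (card_union_le _ _).trans <| add_le_add ((card_union_le _ _).trans <|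
          add_le_add card_image_le card_image_le) card_image_le
    _ = 2 * t - #R := by rw [card_compl, Fintype.card_fin]; omega

variable {a b w z}

theorem reverses_abPriority_base {i : Fin t} (hab : ¬ a i < b i) {y : α} (hy : ¬ a i < y) :
    Reverses_s16 (abPriority a b i) (a i) y :=
  reverses_tierPriority_base hab hab hy

theorem reverses_abPriority_head {i : Fin t} {x : α} (hx : ¬ x < b i) :
    Reverses_s16 (abPriority a b i) x (b i) :=
  reverses_tierPriority_head hx

theorem reverses_wzPriority_base {i : Fin t} (hwz : ¬ w i < z i) {y : α} (hy : ¬ w i < y) :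
    Reverses_s16 (wzPriority w z i) (w i) y :=
  reverses_tierPriority_base hwz hwz hy

theorem reverses_wzPriority_head {i : Fin t} {x : α} (hx : ¬ x < z i) :
    Reverses_s16 (wzPriority w z i) x (z i) :=
  reverses_tierPriority_head hx

theorem reverses_selfPriority_ab {i : Fin t} (hab : ¬ a i < b i) :
    Reverses_s16 (selfPriority a b w z i) (a i) (b i) := by
  unfold selfPriority
  split_ifs with hi
  · exact reverses_tierPriority_head hab
  · exact reverses_tierPriority_base hi hab hab

theorem reverses_selfPriority_wz {i : Fin t} (hwz : ¬ w i < z i)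
    (hS₂ : ¬ (a i < z i ∧ w i < b i)) : Reverses_s16 (selfPriority a b w z i) (w i) (z i) := by
  unfold selfPriority
  split_ifs with hi
  · exact reverses_tierPriority_base (fun h => hS₂ ⟨hi, h⟩) hwz hwz
  · exact reverses_tierPriority_head hwz

theorem reverses_selfPriority_az {i q : Fin t} (hab : ¬ a i < b i) (hi : ¬ a i < z i)
    (hq : ¬ a i < z q) : Reverses_s16 (selfPriority a b w z i) (a i) (z q) := by
  rw [selfPriority, if_neg hi]
  exact reverses_tierPriority_base hi hab hq

theorem reverses_selfPriority_wb {i x : Fin t} (hi : a i < z i) (hx : ¬ w x < b i) :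
    Reverses_s16 (selfPriority a b w z i) (w x) (b i) := by
  rw [selfPriority, if_pos hi]
  exact reverses_tierPriority_head hx

theorem reverses_selfPriority_wb_self {i : Fin t} (hwz : ¬ w i < z i) (hi : ¬ a i < z i)
    (hwb : ¬ w i < b i) : Reverses_s16 (selfPriority a b w z i) (w i) (b i) := by
  rw [selfPriority, if_neg hi]
  exact reverses_tierPriority_pivot hwz hwb

theorem reverses_arcPriority_wz {j q : Fin t} (hwz : ¬ w q < z q) (hjq : Arc a b w z j q) :
    Reverses_s16 (arcPriority a b w z j q) (w q) (z q) := by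
  unfold arcPriority
  unfold Arc at hjq
  split_ifs at hjq ⊢
  · exact reverses_tierPriority_head hwz
  · exact reverses_tierPriority_base hjq hwz hwz

theorem reverses_arcPriority_az {j q : Fin t} (hab : ¬ a j < b j) (hj : a j < z j)
    (hjq : Arc a b w z j q) {y : α} (hy : ¬ a j < y) :
    Reverses_s16 (arcPriority a b w z j q) (a j) y := by
  rw [Arc, if_pos hj] at hjq
  rw [arcPriority, if_pos hj]
  exact reverses_tierPriority_base hjq hab hy

theorem reverses_arcPriority_wb {j q x : Fin t} (hj : ¬ a j < z j) (hx : ¬ w x < b j) :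
    Reverses_s16 (arcPriority a b w z j q) (w x) (b j) := by
  rw [arcPriority, if_neg hj]
  exact reverses_tierPriority_head hx

section Cover

variable (hab : ∀ i, ¬ a i < b i) (hwz : ∀ i, ¬ w i < z i)
  (hS₂ : ∀ i, ¬ (a i < z i ∧ w i < b i))
include hab hwz hS₂

theorem isCover_matchingFamily {D : Finset (Fin t)} {π : Fin t → Fin t}
    (hπ : ∀ j ∈ D, Arc a b w z j (π j)) : IsCover a b w z (matchingFamily a b w z D π) := by
  classical
  set P := matchingFamily a b w z D π
  have hself : ∀ j ∈ D, selfPriority a b w z j ∈ P := fun j hj =>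
    mem_union_left _ <| mem_union_left _ <| mem_union_left _ <| mem_image_of_mem _ hj
  have harc : ∀ j ∈ D, arcPriority a b w z j (π j) ∈ P := fun j hj =>
    mem_union_left _ <| mem_union_left _ <| mem_union_right _ <|
      mem_image_of_mem (fun j => arcPriority a b w z j (π j)) hj
  have hwzP : ∀ i ∉ D ∪ D.image π, wzPriority w z i ∈ P := fun i hi =>
    mem_union_left _ <| mem_union_right _ <| mem_image_of_mem _ (mem_compl.2 hi)
  have habP : ∀ i ∉ D, abPriority a b i ∈ P := fun i hi =>
    mem_union_right _ <| mem_image_of_mem _ (mem_compl.2 hi)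
  refine ⟨fun i => ?_, fun i => ?_, fun i q hq => ?_, fun i q hq => ?_⟩
  · by_cases hi : i ∈ D
    · exact ⟨_, hself i hi, reverses_selfPriority_ab (hab i)⟩
    · exact ⟨_, habP i hi, reverses_abPriority_head (hab i)⟩
  · by_cases hi : i ∈ D
    · exact ⟨_, hself i hi, reverses_selfPriority_wz (hwz i) (hS₂ i)⟩
    by_cases hi' : ∃ j ∈ D, π j = i
    · obtain ⟨j, hj, rfl⟩ := hi'
      exact ⟨_, harc j hj, reverses_arcPriority_wz (hwz _) (hπ j hj)⟩
    · exact ⟨_, hwzP i (by simpa [hi] using hi'), reverses_wzPriority_head (hwz i)⟩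
  · by_cases hi : i ∈ D
    · by_cases hiz : a i < z i
      · exact ⟨_, harc i hi, reverses_arcPriority_az (hab i) hiz (hπ i hi) hq⟩
      · exact ⟨_, hself i hi, reverses_selfPriority_az (hab i) hiz hq⟩
    · exact ⟨_, habP i hi, reverses_abPriority_base (hab i) hq⟩
  · by_cases hqD : q ∈ D
    · by_cases hqz : a q < z q
      · exact ⟨_, hself q hqD, reverses_selfPriority_wb hqz hq⟩
      · exact ⟨_, harc q hqD, reverses_arcPriority_wb hqz hq⟩
    · exact ⟨_, habP q hqD, reverses_abPriority_head hq⟩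

theorem isCover_independentFamily {R : Finset (Fin t)}
    (hR : ∀ j ∈ R, ∀ q ∈ R, j ≠ q → ¬ Arc a b w z j q) :
    IsCover a b w z (independentFamily a b w z R) := by
  classical
  set P := independentFamily a b w z R
  have hself : ∀ j ∈ R, selfPriority a b w z j ∈ P := fun j hj =>
    mem_union_left _ <| mem_union_left _ <| mem_image_of_mem _ hj
  have habP : ∀ i ∉ R, abPriority a b i ∈ P := fun i hi =>
    mem_union_left _ <| mem_union_right _ <| mem_image_of_mem _ (mem_compl.2 hi)
  have hwzP : ∀ i ∉ R, wzPriority w z i ∈ P := fun i hi =>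
    mem_union_right _ <| mem_image_of_mem _ (mem_compl.2 hi)
  refine ⟨fun i => ?_, fun i => ?_, fun i q hq => ?_, fun i q hq => ?_⟩
  · by_cases hi : i ∈ R
    · exact ⟨_, hself i hi, reverses_selfPriority_ab (hab i)⟩
    · exact ⟨_, habP i hi, reverses_abPriority_head (hab i)⟩
  · by_cases hi : i ∈ R
    · exact ⟨_, hself i hi, reverses_selfPriority_wz (hwz i) (hS₂ i)⟩
    · exact ⟨_, hwzP i hi, reverses_wzPriority_head (hwz i)⟩
  · by_cases hi : i ∈ R
    · by_cases hiz : a i < z i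
      · have hqR : q ∉ R := fun hqR =>
          hR i hi q hqR (by rintro rfl; exact hq hiz) (by rwa [Arc, if_pos hiz])
        exact ⟨_, hwzP q hqR, reverses_wzPriority_head hq⟩
      · exact ⟨_, hself i hi, reverses_selfPriority_az (hab i) hiz hq⟩
    · exact ⟨_, habP i hi, reverses_abPriority_base (hab i) hq⟩
  · by_cases hqR : q ∈ R
    · by_cases hqz : a q < z q
      · exact ⟨_, hself q hqR, reverses_selfPriority_wb hqz hq⟩
      by_cases hiq : i = q
      · subst hiq
        exact ⟨_, hself i hqR, reverses_selfPriority_wb_self (hwz i) hqz hq⟩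
      · have hiR : i ∉ R := fun hiR =>
          hR q hqR i hiR (Ne.symm hiq) (by rwa [Arc, if_neg hqz])
        exact ⟨_, hwzP i hiR, reverses_wzPriority_base (hwz i) hq⟩
    · exact ⟨_, habP q hqR, reverses_abPriority_head hq⟩

end Cover

theorem idim_le_of_isCover {A B : Set α} (hAB : ∀ u v, u < v → u ∈ A ∧ v ∈ B)
    (hdisj : Disjoint A B) (hAeq : A = Set.range a ∪ Set.range w)
    (hBeq : B = Set.range b ∪ Set.range z) (hT : ∀ i j, a i < b j ↔ i ≠ j)
    (hT' : ∀ i j, w i < z j ↔ i ≠ j) {P : Finset (α → ℕ)} (hP : IsCover a b w z P) :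
    Idim α A B ≤ #P := by
  refine idim_le_card hAB hdisj P ?_
  rintro x hx y hy ⟨hxy, -⟩
  rw [hAeq] at hx
  rw [hBeq] at hy
  rcases hx with ⟨i, rfl⟩ | ⟨i, rfl⟩ <;> rcases hy with ⟨q, rfl⟩ | ⟨q, rfl⟩
  · obtain rfl : i = q := not_not.1 fun h => hxy ((hT i q).2 h).le
    exact hP.ab i
  · exact hP.az i q fun h => hxy h.le
  · exact hP.wb i q fun h => hxy h.le
  · obtain rfl : i = q := not_not.1 fun h => hxy ((hT' i q).2 h).le
    exact hP.wz i

end TwoStandardExamples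

end

theorem stmt_16_general (α : Type*) [PartialOrder α] (A B : Set α)
    (hA : ∀ a ∈ A, IsMin a) (hB : ∀ b ∈ B, IsMax b)
    (hcover : A ∪ B = Set.univ) (hdisj : Disjoint A B)
    (s : ℕ)
    (a b w z : Fin (5 * s) → α)
    (hAeq : A = Set.range a ∪ Set.range w)
    (hBeq : B = Set.range b ∪ Set.range z)
    (hT : ∀ i j, a i < b j ↔ i ≠ j)
    (hT' : ∀ i j, w i < z j ↔ i ≠ j)
    (hnotS2 : ∀ i, ¬ (a i < z i ∧ w i < b i)) :
    Idim α A B ≤ 9 * s := by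
  have hAB : ∀ u v, u < v → u ∈ A ∧ v ∈ B := fun u v huv => by
    have hu : u ∈ A ∪ B := hcover ▸ Set.mem_univ u
    have hv : v ∈ A ∪ B := hcover ▸ Set.mem_univ v
    exact ⟨hu.resolve_right fun h => (hB u h).not_lt huv,
      hv.resolve_left fun h => (hA v h).not_lt huv⟩
  have hab : ∀ i, ¬ a i < b i := fun i h => (hT i i).1 h rfl
  have hwz : ∀ i, ¬ w i < z i := fun i h => (hT' i i).1 h rfl
  obtain ⟨P, hP, hPcard⟩ : ∃ P : Finset (α → ℕ), IsCover a b w z P ∧ P.card ≤ 2 * (5 * s) - s := by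
    have huniv : 2 * s + s ≤ (Finset.univ : Finset (Fin (5 * s))).card := by
      rw [Finset.card_univ, Fintype.card_fin]; omega
    rcases exists_matching_or_independent (Arc a b w z) s s _ huniv with
      ⟨D, -, π, hD, hπ, hinj⟩ | ⟨R, -, hR, hind⟩
    · have hcard := card_matchingFamily_le a b w z
        (fun j hj => (Finset.mem_sdiff.1 (hπ j hj).1).2) hinj
      exact ⟨_, isCover_matchingFamily hab hwz hnotS2 fun j hj => (hπ j hj).2, by omega⟩
    · have hcard := card_independentFamily_le a b w z R
      exact ⟨_, isCover_independentFamily hab hwz hnotS2 hind, by omega⟩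
  calc Idim α A B ≤ P.card := idim_le_of_isCover hAB hdisj hAeq hBeq hT hT' hP
    _ ≤ 9 * s := by omega

/-- Let `s ≥ 1`, `t = 5s`, and let `P = A ∪ B` be a balanced bipartite poset with
`|P| = 4t`, partitioned into two disjoint copies `T`, `T'` of the standard example
`S_t`, with matchings `T = {a₁,…,a_t} ∪ {b₁,…,b_t}` and `T' = {w₁,…,w_t} ∪ {z₁,…,z_t}`.
If for each `i` the 4-element subposet `{aᵢ, bᵢ, wᵢ, zᵢ}` is not a copy of `S₂`
(equivalently, not both `aᵢ < zᵢ` and `wᵢ < bᵢ` hold), then `Idim P ≤ 9s`. -/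
theorem stmt_16 (α : Type*) [PartialOrder α] [Fintype α] (A B : Set α)
    (hA : ∀ a ∈ A, IsMin a) (hB : ∀ b ∈ B, IsMax b)
    (hcover : A ∪ B = Set.univ) (hdisj : Disjoint A B)
    (s : ℕ) (hs : 1 ≤ s)
    (hcard : Fintype.card α = 4 * (5 * s))
    (a b w z : Fin (5 * s) → α)
    (ha : Function.Injective a) (hb : Function.Injective b)
    (hw : Function.Injective w) (hz : Function.Injective z)
    (haw : ∀ i j, a i ≠ w j) (hbz : ∀ i j, b i ≠ z j)
    (hAeq : A = Set.range a ∪ Set.range w)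
    (hBeq : B = Set.range b ∪ Set.range z)
    (hT : ∀ i j, a i < b j ↔ i ≠ j)
    (hT' : ∀ i j, w i < z j ↔ i ≠ j)
    (hnotS2 : ∀ i, ¬ (a i < z i ∧ w i < b i)) :
    Idim α A B ≤ 9 * s :=
  stmt_16_general α A B hA hB hcover hdisj s a b w z hAeq hBeq hT hT' hnotS2
end
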